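/- arXiv:2210.10823 — 6 statements merged into one kernel-verified Lean document; each statement's English description precedes it below -/
import Mathlib

section
/- Let G be a group, H a Hilbert space, ε > 0, and let φ: G → U(H) be a unitary ε-representation, i.e., ‖φ(xy) − φ(x)φ(y)‖ ≤ ε for all x,y ∈ G. Suppose ψ: G → B(H) is a positive definite map such that for every finite set F ⊆ G, every integer n ≥ 1, and every finite family of functions ξ_1,…,ξ_n, ζ_1,…,ζ_n: F → H, there exists y ∈ G with ∑_{i=1}^n ∑_{x∈F} ‖φ(xy) φ(y)* ξ_i(x) − ψ(x) ξ_i(x)‖² ≤ ∑_{i=1}^n ∑_{x∈F} ‖φ(xy) φ(y)* ξ_i(x) − ζ_i(x)‖². Then ‖φ(x) − ψ(x)‖ ≤ 2ε for all x ∈ G. -/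
open scoped ComplexOrder

/-- A map `ψ : G → B(H)` is positive definite. -/
def PosDefMap {G : Type*} [Group G] {H : Type*} [NormedAddCommGroup H]
    [InnerProductSpace ℂ H] (ψ : G → H →L[ℂ] H) : Prop :=
  ∀ (n : ℕ) (x : Fin n → G) (ξ : Fin n → H),
    0 ≤ ∑ i, ∑ j, (inner ℂ (ψ ((x i)⁻¹ * x j) (ξ j)) (ξ i) : ℂ)

/-!
Fix `x` and a vector `v`. Applying the approximation condition with `F = {x}`, `n = 1`,
`ξ = v` and `ζ = φ(·) v` gives `y` such that `A := φ(xy) φ(y)*` satisfies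
`‖A v - ψ(x) v‖ ≤ ‖A v - φ(x) v‖`. Since `φ(y)` is unitary,
`‖A - φ(x)‖ = ‖φ(xy) - φ(x) φ(y)‖ ≤ ε`, and the triangle inequality through `A v` gives
`‖φ(x) v - ψ(x) v‖ ≤ 2 ‖A v - φ(x) v‖ ≤ 2 ε ‖v‖`.
-/

theorem CStarRing.norm_mul_star_sub_eq {E : Type*} [NormedRing E] [StarRing E] [CStarRing E]
    {u : E} (hu : u ∈ unitary E) (a b : E) :
    ‖a * star u - b‖ = ‖a - b * u‖ := by
  rw [← norm_mul_mem_unitary (a - b * u) (Unitary.star_mem hu), sub_mul, mul_assoc,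
    Unitary.mul_star_self_of_mem hu, mul_one]

theorem norm_sub_le_two_mul_of_norm_sub_le {E : Type*} [SeminormedAddCommGroup E] {a b c : E}
    (h : ‖a - c‖ ≤ ‖a - b‖) : ‖b - c‖ ≤ 2 * ‖a - b‖ :=
  calc ‖b - c‖ ≤ ‖b - a‖ + ‖a - c‖ := norm_sub_le_norm_sub_add_norm_sub b a c
    _ ≤ 2 * ‖a - b‖ := by rw [norm_sub_rev b a]; linarith

theorem stmt_1_general {G : Type*} [Group G] {H : Type*} [NormedAddCommGroup H]
    [InnerProductSpace ℂ H] [CompleteSpace H] (ε : ℝ)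
    (φ : G → H →L[ℂ] H) (hunit : ∀ x, φ x ∈ unitary (H →L[ℂ] H))
    (hrep : ∀ x y, ‖φ (x * y) - φ x * φ y‖ ≤ ε)
    (ψ : G → H →L[ℂ] H)
    (h : ∀ (F : Finset G) (n : ℕ), 1 ≤ n → ∀ ξ ζ : Fin n → G → H, ∃ y : G,
      ∑ i, ∑ x ∈ F,
          ‖((φ (x * y)).comp (ContinuousLinearMap.adjoint (φ y))) (ξ i x) -
            ψ x (ξ i x)‖ ^ 2 ≤
        ∑ i, ∑ x ∈ F,
          ‖((φ (x * y)).comp (ContinuousLinearMap.adjoint (φ y))) (ξ i x) - ζ i x‖ ^ 2) :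
    ∀ x, ‖φ x - ψ x‖ ≤ 2 * ε := by
  intro x
  have hε : 0 ≤ ε := (norm_nonneg _).trans (hrep 1 1)
  refine ContinuousLinearMap.opNorm_le_bound _ (by positivity) fun v => ?_
  obtain ⟨y, hy⟩ := h {x} 1 le_rfl (fun _ _ => v) (fun _ x' => φ x' v)
  set A := (φ (x * y)).comp (ContinuousLinearMap.adjoint (φ y))
  have hcloser : ‖A v - ψ x v‖ ≤ ‖A v - φ x v‖ := by
    simp only [Fin.sum_univ_one, Finset.sum_singleton] at hy
    exact le_of_sq_le_sq hy (norm_nonneg _)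
  have hA : ‖A - φ x‖ ≤ ε := by
    have hnorm := CStarRing.norm_mul_star_sub_eq (hunit y) (φ (x * y)) (φ x)
    rw [ContinuousLinearMap.star_eq_adjoint] at hnorm
    exact hnorm.trans_le (hrep x y)
  calc ‖(φ x - ψ x) v‖ = ‖φ x v - ψ x v‖ := rfl
    _ ≤ 2 * ‖A v - φ x v‖ := norm_sub_le_two_mul_of_norm_sub_le hcloser
    _ ≤ 2 * (ε * ‖v‖) := by
      gcongr
      exact (A - φ x).le_opNorm v |>.trans (by gcongr)
    _ = 2 * ε * ‖v‖ := by ring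

/-- If `φ : G → U(H)` is a unitary `ε`-representation and `ψ : G → B(H)` is
a positive definite map satisfying the approximation condition (5) of the paper, then
`‖φ(x) - ψ(x)‖ ≤ 2ε` for all `x`. -/
theorem stmt_1 {G : Type*} [Group G] {H : Type*} [NormedAddCommGroup H]
    [InnerProductSpace ℂ H] [CompleteSpace H] (ε : ℝ) (hε : 0 < ε)
    (φ : G → H →L[ℂ] H) (hunit : ∀ x, φ x ∈ unitary (H →L[ℂ] H))
    (hrep : ∀ x y, ‖φ (x * y) - φ x * φ y‖ ≤ ε)
    (ψ : G → H →L[ℂ] H) (hψ : PosDefMap ψ)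
    (h : ∀ (F : Finset G) (n : ℕ), 1 ≤ n → ∀ ξ ζ : Fin n → G → H, ∃ y : G,
      ∑ i, ∑ x ∈ F,
          ‖((φ (x * y)).comp (ContinuousLinearMap.adjoint (φ y))) (ξ i x) -
            ψ x (ξ i x)‖ ^ 2 ≤
        ∑ i, ∑ x ∈ F,
          ‖((φ (x * y)).comp (ContinuousLinearMap.adjoint (φ y))) (ξ i x) - ζ i x‖ ^ 2) :
    ∀ x, ‖φ x - ψ x‖ ≤ 2 * ε :=
  stmt_1_general ε φ hunit hrep ψ h
end

section
/- Let H be a Hilbert space, T ∈ B(H) a bounded operator, X a nonempty set, and φ: X → B(H) a map. The following are equivalent: (1) for every n ≥ 1 and all vectors ξ_1,…,ξ_n ∈ H and η_1,…,η_n ∈ H, there exists x ∈ X such that ∑_{i=1}^n ‖φ(x)ξ_i − Tξ_i‖² ≤ ∑_{i=1}^n ‖φ(x)ξ_i − η_i‖²; (2) T belongs to the closure of the convex hull of {φ(x) : x ∈ X} with respect to the strong operator topology on B(H). -/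
/-!
Fix finitely many vectors `ξ₁, …, ξₙ` and sample operators at them, `A ↦ (A ξᵢ)ᵢ`, into the
Hilbert space `ℓ²(Fin n, H)`. A neighbourhood basis of the strong operator topology is given
by such finite samples, so (2) says that for every `ξ` the sample `v` of `T` lies in the closed
convex hull `K` of the samples `s` of the `φ x`; and (1) says that no point `η` is strictly
closer than `v` to all of them. In a Hilbert space these agree: the set of points closer to `η`
than to `v` is a half-space, so if it contained every `s` it would contain `K ∋ v`; conversely,
if `v ∉ K`, its nearest point `η ∈ K` sees every `s ∈ K` at an obtuse angle from `v`, whence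
`‖s - v‖² ≥ ‖s - η‖² + ‖v - η‖² > ‖s - η‖²`.
-/

open Set Filter Topology

section InnerProductSpace

variable {F : Type*} [NormedAddCommGroup F] [InnerProductSpace ℝ F]

theorem convex_setOf_norm_sub_le_norm_sub (a b : F) :
    Convex ℝ {w : F | ‖w - a‖ ≤ ‖w - b‖} := by
  have : {w : F | ‖w - a‖ ≤ ‖w - b‖} = {w | inner ℝ (b - a) w ≤ (‖b‖ ^ 2 - ‖a‖ ^ 2) / 2} := by
    ext w
    rw [mem_ofPred_eq, mem_ofPred_eq, ← sq_le_sq₀ (norm_nonneg _) (norm_nonneg _),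
      norm_sub_sq_real, norm_sub_sq_real, inner_sub_left, real_inner_comm a, real_inner_comm b]
    constructor <;> intro h <;> linarith
  rw [this]
  exact convex_halfSpace_le (innerₛₗ ℝ (b - a)).isLinear _

theorem mem_closure_convexHull_iff_forall_exists_norm_sub_le [CompleteSpace F] {S : Set F}
    {v : F} : v ∈ closure (convexHull ℝ S) ↔ ∀ η : F, ∃ s ∈ S, ‖s - v‖ ≤ ‖s - η‖ := by
  constructor
  · intro hv η
    by_contra! hfar
    have hS : S ⊆ {w | ‖w - η‖ ≤ ‖w - v‖} := fun s hs => (hfar s hs).le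
    have hvη : ‖v - η‖ ≤ ‖v - v‖ :=
      closure_minimal (convexHull_min hS (convex_setOf_norm_sub_le_norm_sub η v))
        (isClosed_le (by fun_prop) (by fun_prop)) hv
    obtain ⟨s, hs⟩ := convexHull_nonempty_iff.mp (closure_nonempty_iff.mp ⟨v, hv⟩)
    rw [sub_self, norm_zero, norm_le_zero_iff, sub_eq_zero] at hvη
    exact (hfar s hs).ne (by rw [hvη])
  · intro h
    obtain ⟨s₀, hs₀, -⟩ := h v
    have hK : Convex ℝ (closure (convexHull ℝ S)) := (convex_convexHull ℝ S).closure
    obtain ⟨η, hηK, hηmin⟩ := exists_norm_eq_iInf_of_complete_convex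
      ⟨s₀, subset_closure (subset_convexHull ℝ S hs₀)⟩ isClosed_closure.isComplete hK v
    have hobtuse := (norm_eq_iInf_iff_real_inner_le_zero hK hηK).mp hηmin
    obtain ⟨s, hs, hsv⟩ := h η
    have hpyth : ‖s - η‖ ^ 2 + ‖v - η‖ ^ 2 ≤ ‖s - v‖ ^ 2 := by
      have := hobtuse s (subset_closure (subset_convexHull ℝ S hs))
      rw [show s - v = (s - η) - (v - η) by abel, @norm_sub_sq_real _ _ _ (s - η),
        real_inner_comm]
      linarith
    have : ‖v - η‖ = 0 := by nlinarith [norm_nonneg (v - η), norm_nonneg (s - v)]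
    rwa [norm_eq_zero, sub_eq_zero.mp this] at *

end InnerProductSpace

theorem mem_closure_pi_iff_forall_fin {ι Y : Type*} [TopologicalSpace Y] {D : Set (ι → Y)}
    {f : ι → Y} : f ∈ closure D ↔ ∀ (n : ℕ) (ξ : Fin n → ι), f ∘ ξ ∈ closure ((· ∘ ξ) '' D) := by
  refine ⟨fun hf n ξ =>
    map_mem_closure (f := fun g : ι → Y => g ∘ ξ) (by fun_prop) hf (mapsTo_image _ _),
    fun h => ?_⟩
  rw [mem_closure_iff_nhds]
  intro U hU
  rw [nhds_pi, Filter.mem_pi] at hU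
  obtain ⟨I, hI, V, hV, hIV⟩ := hU
  obtain ⟨n, ξ, rfl⟩ := hI.fin_embedding
  obtain ⟨_, hdV, d, hd, rfl⟩ := mem_closure_iff_nhds.mp (h n ξ) _
    (set_pi_mem_nhds finite_univ fun i _ => hV (ξ i))
  exact ⟨d, hIV fun _ ⟨i, hi⟩ => hi ▸ hdV i (mem_univ i), hd⟩

theorem PiLp.toLp_mem_closure_image_iff {p : ENNReal} {ι : Type*} {β : ι → Type*}
    [∀ i, TopologicalSpace (β i)] {A : Set (∀ i, β i)} {a : ∀ i, β i} :
    WithLp.toLp p a ∈ closure (WithLp.toLp p '' A) ↔ a ∈ closure A := by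
  rw [(PiLp.homeomorph p β).symm.isInducing.closure_eq_preimage_closure_image A]
  rfl

section EvalL2

variable {H : Type*} [NormedAddCommGroup H] [NormedSpace ℂ H] {n : ℕ}

def evalL2 (ξ : Fin n → H) : (H →L[ℂ] H) →ₗ[ℝ] WithLp 2 (Fin n → H) where
  toFun A := WithLp.toLp 2 (A ∘ ξ)
  map_add' _ _ := rfl
  map_smul' _ _ := rfl

theorem evalL2_apply (ξ : Fin n → H) (A : H →L[ℂ] H) : evalL2 ξ A = WithLp.toLp 2 (A ∘ ξ) :=
  rfl

end EvalL2

theorem comp_mem_closure_convexHull_iff_forall_exists_sum_le {H : Type*} [NormedAddCommGroup H]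
    [InnerProductSpace ℂ H] [CompleteSpace H] {X : Type*} {n : ℕ}
    (T : H →L[ℂ] H) (φ : X → H →L[ℂ] H) (ξ : Fin n → H) :
    ⇑T ∘ ξ ∈ closure ((· ∘ ξ) ''
        ((fun A : H →L[ℂ] H => (⇑A : H → H)) '' convexHull ℝ (range φ))) ↔
      ∀ η : Fin n → H, ∃ x, ∑ i, ‖φ x (ξ i) - T (ξ i)‖ ^ 2 ≤ ∑ i, ‖φ x (ξ i) - η i‖ ^ 2 := by
  let _ : InnerProductSpace ℝ (WithLp 2 (Fin n → H)) := InnerProductSpace.rclikeToReal ℂ _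
  rw [image_image, ← PiLp.toLp_mem_closure_image_iff (p := 2), image_image]
  change evalL2 ξ T ∈ closure (evalL2 ξ '' _) ↔ _
  rw [LinearMap.image_convexHull, ← range_comp,
    mem_closure_convexHull_iff_forall_exists_norm_sub_le, (WithLp.toLp_surjective 2).forall]
  simp only [exists_range_iff, ← sq_le_sq₀ (norm_nonneg _) (norm_nonneg _), Function.comp_apply,
    evalL2_apply, ← WithLp.toLp_sub, PiLp.norm_sq_eq_of_L2, PiLp.toLp_apply, Pi.sub_apply]

theorem stmt_2_general {H : Type*} [NormedAddCommGroup H] [InnerProductSpace ℂ H] [CompleteSpace H]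
    {X : Type*} (T : H →L[ℂ] H) (φ : X → H →L[ℂ] H) :
    (∀ n : ℕ, 1 ≤ n → ∀ ξ η : Fin n → H, ∃ x : X,
        ∑ i, ‖φ x (ξ i) - T (ξ i)‖ ^ 2 ≤ ∑ i, ‖φ x (ξ i) - η i‖ ^ 2) ↔
      (⇑T : H → H) ∈ closure ((fun A : H →L[ℂ] H => (⇑A : H → H)) ''
        convexHull ℝ (Set.range φ)) := by
  rw [mem_closure_pi_iff_forall_fin]
  simp only [comp_mem_closure_convexHull_iff_forall_exists_sum_le]
  refine ⟨fun h => ?_, fun h n _ => h n⟩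
  rintro (_ | n)
  · -- with no sample vectors only `Nonempty X` is asked for, and the case `n = 1` provides it
    obtain ⟨x, -⟩ := h 1 le_rfl 0 0
    exact fun _ _ => ⟨x, by simp⟩
  · exact h _ n.succ_pos

/-- Let `H` be a Hilbert space, `T ∈ B(H)`, `X` a nonempty set and
`φ : X → B(H)`. Then (1) for every `n ≥ 1` and all `ξ₁,…,ξₙ, η₁,…,ηₙ ∈ H` there is `x ∈ X`
with `∑ᵢ ‖φ(x)ξᵢ - Tξᵢ‖² ≤ ∑ᵢ ‖φ(x)ξᵢ - ηᵢ‖²`, iff (2) `T` lies in the closure of the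
convex hull of `{φ(x) : x ∈ X}` with respect to the strong operator topology (i.e. the
topology of pointwise convergence, expressed here via the product topology on `H → H`). -/
theorem stmt_2 {H : Type*} [NormedAddCommGroup H] [InnerProductSpace ℂ H] [CompleteSpace H]
    {X : Type*} [Nonempty X] (T : H →L[ℂ] H) (φ : X → H →L[ℂ] H) :
    (∀ n : ℕ, 1 ≤ n → ∀ ξ η : Fin n → H, ∃ x : X,
        ∑ i, ‖φ x (ξ i) - T (ξ i)‖ ^ 2 ≤ ∑ i, ‖φ x (ξ i) - η i‖ ^ 2) ↔
      (⇑T : H → H) ∈ closure ((fun A : H →L[ℂ] H => (⇑A : H → H)) ''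
        convexHull ℝ (Set.range φ)) :=
  stmt_2_general T φ
end

section
/- Let G be a countable discrete group. The following are equivalent: (1) for every finite family of bounded functions f_1,…,f_n: G → ℂ, there exist a sequence (μ_k) of finitely supported probability measures on G and positive definite functions ψ_1,…,ψ_n: G → ℂ such that for every x ∈ G and each i, ∑_{y∈G} μ_k(y) f_i(xy) conj(f_i(y)) → ψ_i(x) as k → ∞; (2) for every finite family of bounded functions f_1,…,f_n: G → ℂ, there exists a state τ on ℓ∞(G) such that each of the functions x ↦ τ_y( f_i(xy) · conj(f_i(y)) ) (where τ is applied to the bounded function of the variable y) is positive definite on G. -/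
open scoped ComplexOrder

/-- `f : G → ℂ` is bounded, i.e. `f ∈ ℓ∞(G)`. -/
def IsBddFun {G : Type*} (f : G → ℂ) : Prop := ∃ C : ℝ, ∀ x, ‖f x‖ ≤ C

/-- A state on `ℓ∞(G)`: a positive unital linear functional, encoded as a functional on
all functions `G → ℂ` whose linearity, positivity and unitality are imposed on bounded
functions. -/
structure LinftyState (G : Type*) where
  toFun : (G → ℂ) → ℂ
  map_add : ∀ f g : G → ℂ, IsBddFun f → IsBddFun g → toFun (f + g) = toFun f + toFun g
  map_smul : ∀ (c : ℂ) (f : G → ℂ), IsBddFun f → toFun (c • f) = c * toFun f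
  pos : ∀ f : G → ℂ, IsBddFun f → (∀ x, 0 ≤ f x) → 0 ≤ toFun f
  unital : toFun (fun _ => (1 : ℂ)) = 1

/-- A function `ψ : G → ℂ` is positive definite. -/
def PosDefFun {G : Type*} [Group G] (ψ : G → ℂ) : Prop :=
  ∀ (n : ℕ) (x : Fin n → G) (c : Fin n → ℂ),
    0 ≤ ∑ i, ∑ j, (starRingEnd ℂ) (c i) * c j * ψ ((x i)⁻¹ * x j)

/-- A finitely supported probability measure on `G`. -/
structure FinProb (G : Type*) where
  w : G →₀ ℝ
  nonneg : ∀ y, 0 ≤ w y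
  sum_one : w.sum (fun _ r => r) = 1

namespace Stmt6Aux

open Filter

variable {G : Type*}

noncomputable def Sseq (μ : ℕ → FinProb G) (g : G → ℂ) (k : ℕ) : ℂ :=
  (μ k).w.sum fun y r => (r : ℂ) * g y

lemma sseq_norm_le {μ : ℕ → FinProb G} {g : G → ℂ} {C : ℝ} (hC : ∀ y, ‖g y‖ ≤ C) (k : ℕ) :
    ‖Sseq μ g k‖ ≤ C := by
  have h1 : ‖Sseq μ g k‖ ≤ ∑ y ∈ (μ k).w.support, (μ k).w y * C := by
    refine (norm_sum_le _ _).trans (Finset.sum_le_sum fun y _ => ?_)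
    rw [norm_mul, Complex.norm_real, Real.norm_eq_abs, abs_of_nonneg ((μ k).nonneg y)]
    exact mul_le_mul_of_nonneg_left (hC y) ((μ k).nonneg y)
  have h2 : ∑ y ∈ (μ k).w.support, (μ k).w y * C = 1 * C := by
    rw [← Finset.sum_mul]
    congr 1
    simpa [Finsupp.sum] using (μ k).sum_one
  linarith

lemma sseq_add (μ : ℕ → FinProb G) (f g : G → ℂ) (k : ℕ) :
    Sseq μ (f + g) k = Sseq μ f k + Sseq μ g k := by
  simp [Sseq, Finsupp.sum, mul_add, Finset.sum_add_distrib]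

lemma sseq_smul (μ : ℕ → FinProb G) (c : ℂ) (f : G → ℂ) (k : ℕ) :
    Sseq μ (c • f) k = c * Sseq μ f k := by
  simp [Sseq, Finsupp.sum, Finset.mul_sum]
  ring_nf
  simp [mul_comm, mul_left_comm]

lemma sseq_nonneg (μ : ℕ → FinProb G) (f : G → ℂ) (hf : ∀ x, 0 ≤ f x) (k : ℕ) :
    0 ≤ Sseq μ f k := by
  refine Finset.sum_nonneg fun y _ => ?_
  have := hf y
  have h0 : (0:ℂ) ≤ ((μ k).w y : ℂ) := by
    rw [Complex.zero_le_real]; exact (μ k).nonneg y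
  exact mul_nonneg h0 this

lemma sseq_one (μ : ℕ → FinProb G) (k : ℕ) :
    Sseq μ (fun _ => (1:ℂ)) k = 1 := by
  have := (μ k).sum_one
  simp only [Finsupp.sum] at this ⊢
  simp only [Sseq, Finsupp.sum, mul_one]
  rw [← Complex.ofReal_sum, this, Complex.ofReal_one]

noncomputable def tauOf (μ : ℕ → FinProb G) (g : G → ℂ) : ℂ :=
  lim (Filter.map (Sseq μ g) (Filter.hyperfilter ℕ : Filter ℕ))

lemma tendsto_tauOf (μ : ℕ → FinProb G) {g : G → ℂ} (hg : IsBddFun g) :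
    Tendsto (Sseq μ g) (Filter.hyperfilter ℕ : Filter ℕ) (nhds (tauOf μ g)) := by
  obtain ⟨C, hC⟩ := hg
  have hmem : ∀ k, Sseq μ g k ∈ Metric.closedBall (0:ℂ) C := fun k => by
    simpa [Metric.mem_closedBall, dist_eq_norm] using sseq_norm_le hC k
  have hle : (Filter.map (Sseq μ g) (Filter.hyperfilter ℕ)) ≤ Filter.principal (Metric.closedBall (0:ℂ) C) := by
    rw [Filter.le_principal_iff]
    exact Filter.mem_map.mpr (Filter.Eventually.of_forall hmem)
  obtain ⟨a, _, ha⟩ := (isCompact_closedBall (0:ℂ) C).ultrafilter_le_nhds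
    ((Filter.hyperfilter ℕ).map (Sseq μ g)) (by exact_mod_cast hle)
  exact le_nhds_lim ⟨a, by exact_mod_cast ha⟩

noncomputable def stateOf (μ : ℕ → FinProb G) : LinftyState G where
  toFun := tauOf μ
  map_add := fun f g hf hg => by
    have h1 := tendsto_tauOf μ (g := f + g) ?_
    · have h2 := (tendsto_tauOf μ hf).add (tendsto_tauOf μ hg)
      have h3 : Tendsto (Sseq μ (f + g)) (Filter.hyperfilter ℕ : Filter ℕ)
          (nhds (tauOf μ f + tauOf μ g)) := by
        rw [show Sseq μ (f + g) = fun k => Sseq μ f k + Sseq μ g k from funext (sseq_add μ f g)]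
        exact h2
      exact tendsto_nhds_unique h1 h3
    · obtain ⟨C, hC⟩ := hf; obtain ⟨D, hD⟩ := hg
      exact ⟨C + D, fun x => (norm_add_le _ _).trans (add_le_add (hC x) (hD x))⟩
  map_smul := fun c f hf => by
    have h1 := tendsto_tauOf μ (g := c • f) ?_
    · have h2 := (tendsto_tauOf μ hf).const_mul c
      have h3 : Tendsto (Sseq μ (c • f)) (Filter.hyperfilter ℕ : Filter ℕ)
          (nhds (c * tauOf μ f)) := by
        rw [show Sseq μ (c • f) = fun k => c * Sseq μ f k from funext (sseq_smul μ c f)]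
        exact h2
      exact tendsto_nhds_unique h1 h3
    · obtain ⟨C, hC⟩ := hf
      exact ⟨‖c‖ * C, fun x => by
        rw [Pi.smul_apply, norm_smul]
        exact mul_le_mul_of_nonneg_left (hC x) (norm_nonneg c)⟩
  pos := fun f hf hpos => by
    have h1 := tendsto_tauOf μ hf
    have hcl : IsClosed {z : ℂ | 0 ≤ z} := by
      have : {z : ℂ | 0 ≤ z} = Complex.re ⁻¹' (Set.Ici 0) ∩ Complex.im ⁻¹' {0} := by
        ext z
        simp [Complex.le_def, eq_comm]
      rw [this]
      exact (isClosed_Ici.preimage Complex.continuous_re).inter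
        (isClosed_singleton.preimage Complex.continuous_im)
    exact hcl.mem_of_tendsto h1 (Filter.Eventually.of_forall fun k => sseq_nonneg μ f hpos k)
  unital := by
    have h1 := tendsto_tauOf μ (g := fun _ => (1:ℂ)) ⟨1, fun x => by simp⟩
    have h3 : Tendsto (Sseq μ (fun _ => (1:ℂ))) (Filter.hyperfilter ℕ : Filter ℕ) (nhds 1) := by
      rw [show Sseq μ (fun _ => (1:ℂ)) = fun _ => (1:ℂ) from funext (sseq_one μ)]
      exact tendsto_const_nhds
    exact tendsto_nhds_unique h1 h3


open Filter

variable {G : Type*}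

lemma bdd_const (c : ℂ) : IsBddFun (fun _ : G => c) := ⟨‖c‖, fun _ => le_rfl⟩

lemma bdd_add {f g : G → ℂ} (hf : IsBddFun f) (hg : IsBddFun g) : IsBddFun (f + g) := by
  obtain ⟨C, hC⟩ := hf; obtain ⟨D, hD⟩ := hg
  exact ⟨C + D, fun x => (norm_add_le _ _).trans (add_le_add (hC x) (hD x))⟩

lemma bdd_smul (c : ℂ) {f : G → ℂ} (hf : IsBddFun f) : IsBddFun (c • f) := by
  obtain ⟨C, hC⟩ := hf
  exact ⟨‖c‖ * C, fun x => by
    rw [Pi.smul_apply, norm_smul]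
    exact mul_le_mul_of_nonneg_left (hC x) (norm_nonneg c)⟩

lemma bdd_re {f : G → ℂ} (hf : IsBddFun f) : IsBddFun (fun y => ((f y).re : ℂ)) := by
  obtain ⟨C, hC⟩ := hf
  exact ⟨C, fun x => by
    rw [Complex.norm_real, Real.norm_eq_abs]
    exact (Complex.abs_re_le_norm (f x)).trans (hC x)⟩

lemma bdd_im {f : G → ℂ} (hf : IsBddFun f) : IsBddFun (fun y => ((f y).im : ℂ)) := by
  obtain ⟨C, hC⟩ := hf
  exact ⟨C, fun x => by
    rw [Complex.norm_real, Real.norm_eq_abs]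
    exact (Complex.abs_im_le_norm (f x)).trans (hC x)⟩

lemma bdd_conv [Group G] {f : G → ℂ} (hf : IsBddFun f) (x : G) :
    IsBddFun (fun y => f (x * y) * (starRingEnd ℂ) (f y)) := by
  obtain ⟨C, hC⟩ := hf
  refine ⟨C * C, fun y => ?_⟩
  rw [norm_mul, RCLike.norm_conj]
  have h0 : (0:ℝ) ≤ C := le_trans (norm_nonneg _) (hC 1)
  exact mul_le_mul (hC _) (hC _) (norm_nonneg _) h0

variable (τ : LinftyState G)

lemma tau_zero : τ.toFun 0 = 0 := by
  have := τ.map_smul 0 0 (bdd_const 0)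
  simpa using this

lemma tau_const (c : ℂ) : τ.toFun (fun _ => c) = c := by
  have h : (fun _ : G => c) = c • (fun _ => (1:ℂ)) := by funext y; simp
  rw [h, τ.map_smul c _ (bdd_const 1), τ.unital, mul_one]

lemma bdd_sum {ι : Type*} (s : Finset ι) (h : ι → G → ℂ) (hb : ∀ l ∈ s, IsBddFun (h l)) :
    IsBddFun (∑ l ∈ s, h l) := by
  classical
  induction s using Finset.cons_induction with
  | empty => rw [Finset.sum_empty]; exact bdd_const (G := G) 0
  | cons a s ha ih =>
    rw [Finset.sum_cons]
    exact bdd_add (hb a (by simp)) (ih fun l hl => hb l (by simp [hl]))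

lemma tau_sum {ι : Type*} (s : Finset ι) (h : ι → G → ℂ) (hb : ∀ l ∈ s, IsBddFun (h l)) :
    τ.toFun (∑ l ∈ s, h l) = ∑ l ∈ s, τ.toFun (h l) := by
  classical
  induction s using Finset.cons_induction with
  | empty => simpa using tau_zero τ
  | cons a s ha ih =>
    rw [Finset.sum_cons, Finset.sum_cons,
      τ.map_add _ _ (hb a (by simp)) (bdd_sum s h fun l hl => hb l (by simp [hl])),
      ih fun l hl => hb l (by simp [hl])]

lemma tau_real {h : G → ℂ} (hb : IsBddFun h) (hr : ∀ y, (h y).im = 0) :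
    (τ.toFun h).im = 0 := by
  obtain ⟨C, hC⟩ := hb
  have hpos : ∀ y, 0 ≤ h y + (fun _ : G => (C:ℂ)) y := by
    intro y
    rw [Complex.le_def]
    constructor
    · simp only [Complex.add_re, Complex.zero_re, Complex.ofReal_re]
      have := Complex.abs_re_le_norm (h y)
      have h2 := hC y
      have := abs_le.mp (this.trans h2)
      linarith [this.1]
    · simp [hr y]
  have hposτ := τ.pos (h + fun _ => (C:ℂ)) (bdd_add ⟨C, hC⟩ (bdd_const _)) hpos
  rw [τ.map_add _ _ ⟨C, hC⟩ (bdd_const _), tau_const] at hposτ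
  rw [Complex.le_def] at hposτ
  have := hposτ.2
  simp only [Complex.zero_im, Complex.add_im, Complex.ofReal_im] at this
  linarith

lemma mem_closure_hull {ι : Type*} [Fintype ι] (g : ι → G → ℂ)
    (hg : ∀ l, IsBddFun (g l)) :
    (fun l => τ.toFun (g l)) ∈ closure (convexHull ℝ (Set.range (fun y l => g l y))) := by
  classical
  set vec : G → (ι → ℂ) := fun y l => g l y with hvec
  set p : ι → ℂ := fun l => τ.toFun (g l) with hpdef
  by_contra hp'
  obtain ⟨φ, u, hlt, hgt⟩ := geometric_hahn_banach_closed_point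
    ((convex_convexHull ℝ (Set.range vec)).closure) isClosed_closure hp'
  set c : ι → ℝ := fun l => φ (Pi.single l 1) with hc
  set d : ι → ℝ := fun l => φ (Pi.single l Complex.I) with hd
  have hφ : ∀ v : ι → ℂ, φ v = ∑ l, ((v l).re * c l + (v l).im * d l) := by
    intro v
    conv_lhs => rw [← Finset.univ_sum_single v]
    rw [map_sum]
    refine Finset.sum_congr rfl fun l _ => ?_
    have hsingle : Pi.single l (v l)
        = (v l).re • (Pi.single l (1:ℂ) : ι → ℂ) + (v l).im • (Pi.single l Complex.I : ι → ℂ) := by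
      funext a
      by_cases ha : a = l
      · subst ha
        simp [Pi.single_apply, Complex.real_smul, Complex.re_add_im]
      · simp [Pi.single_apply, ha]
    rw [hsingle, map_add, map_smul, map_smul, smul_eq_mul, smul_eq_mul]
  -- real/imaginary part functions
  set gr : ι → G → ℂ := fun l y => ((g l y).re : ℂ) with hgr
  set gi : ι → G → ℂ := fun l y => ((g l y).im : ℂ) with hgi
  have hgrb : ∀ l, IsBddFun (gr l) := fun l => bdd_re (hg l)
  have hgib : ∀ l, IsBddFun (gi l) := fun l => bdd_im (hg l)
  have hdecomp : ∀ l, g l = gr l + Complex.I • gi l := by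
    intro l; funext y
    simp only [Pi.add_apply, Pi.smul_apply, smul_eq_mul, hgr, hgi]
    rw [mul_comm, Complex.re_add_im]
  have htaudecomp : ∀ l, τ.toFun (g l) = τ.toFun (gr l) + Complex.I * τ.toFun (gi l) := by
    intro l
    conv_lhs => rw [hdecomp l]
    rw [τ.map_add _ _ (hgrb l) (bdd_smul _ (hgib l)), τ.map_smul _ _ (hgib l)]
  have hgrim : ∀ l, (τ.toFun (gr l)).im = 0 := fun l =>
    tau_real τ (hgrb l) (fun y => by simp [hgr])
  have hgiim : ∀ l, (τ.toFun (gi l)).im = 0 := fun l =>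
    tau_real τ (hgib l) (fun y => by simp [hgi])
  have hgrval : ∀ l, τ.toFun (gr l) = (((p l).re : ℝ) : ℂ) := by
    intro l
    apply Complex.ext
    · rw [hpdef]
      simp only [htaudecomp l, Complex.add_re, Complex.mul_re, Complex.I_re, Complex.I_im,
        Complex.ofReal_re]
      rw [hgiim l]; ring
    · simp [hgrim l]
  have hgival : ∀ l, τ.toFun (gi l) = (((p l).im : ℝ) : ℂ) := by
    intro l
    apply Complex.ext
    · rw [hpdef]
      simp only [htaudecomp l, Complex.add_im, Complex.mul_im, Complex.I_re, Complex.I_im,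
        Complex.ofReal_re]
      rw [hgrim l]; ring
    · simp [hgiim l]
  -- the function H and its complexification
  set Hc : G → ℂ := fun y => ((φ (vec y) : ℝ) : ℂ) with hHc
  have hHceq : Hc = ∑ l : ι, ((c l : ℂ) • gr l + (d l : ℂ) • gi l) := by
    funext y
    rw [hHc]
    simp only [Finset.sum_apply, Pi.add_apply, Pi.smul_apply, smul_eq_mul]
    rw [hφ (vec y)]
    push_cast [hgr, hgi, hvec]
    refine Finset.sum_congr rfl fun l _ => ?_
    ring
  have hHcb : IsBddFun Hc := by
    rw [hHceq]
    exact bdd_sum _ _ fun l _ => bdd_add (bdd_smul _ (hgrb l)) (bdd_smul _ (hgib l))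
  have htauHc : τ.toFun Hc = ((φ p : ℝ) : ℂ) := by
    rw [hHceq, tau_sum τ _ _ (fun l _ => bdd_add (bdd_smul _ (hgrb l)) (bdd_smul _ (hgib l)))]
    rw [hφ p]
    push_cast
    refine Finset.sum_congr rfl fun l _ => ?_
    rw [τ.map_add _ _ (bdd_smul _ (hgrb l)) (bdd_smul _ (hgib l)),
      τ.map_smul _ _ (hgrb l), τ.map_smul _ _ (hgib l), hgrval l, hgival l]
    ring
  -- positivity argument
  have hHlt : ∀ y, φ (vec y) < u := fun y =>
    hlt (vec y) (subset_closure (subset_convexHull ℝ _ (Set.mem_range_self y)))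
  set D : G → ℂ := fun y => ((u - φ (vec y) : ℝ) : ℂ) with hD
  have hDHc : Hc + D = fun _ => (u : ℂ) := by
    funext y
    simp only [Pi.add_apply, hHc, hD]
    push_cast
    ring
  have hDb : IsBddFun D := by
    obtain ⟨C, hC⟩ := hHcb
    refine ⟨|u| + C, fun y => ?_⟩
    have h2 : ‖Hc y‖ ≤ C := hC y
    rw [hD]
    simp only [Complex.norm_real, Real.norm_eq_abs]
    have : ‖Hc y‖ = |φ (vec y)| := by simp [hHc]
    rw [this] at h2
    calc |u - φ (vec y)| ≤ |u| + |φ (vec y)| := abs_sub _ _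
    _ ≤ |u| + C := by linarith
  have hDpos : ∀ y, (0:ℂ) ≤ D y := fun y =>
    Complex.zero_le_real.mpr (by linarith [hHlt y])
  have h0 := τ.pos D hDb hDpos
  have hsum := τ.map_add Hc D hHcb hDb
  rw [hDHc, tau_const, htauHc] at hsum
  have hDval : τ.toFun D = ((u - φ p : ℝ) : ℂ) := by
    push_cast
    rw [eq_sub_iff_add_eq, hsum]
    ring
  rw [hDval, Complex.zero_le_real] at h0
  linarith

lemma state_approx {ι : Type*} [Fintype ι] (g : ι → G → ℂ)
    (hg : ∀ l, IsBddFun (g l)) {ε : ℝ} (hε : 0 < ε) :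
    ∃ μ : FinProb G, ∀ l, ‖(μ.w.sum fun y r => (r:ℂ) * g l y) - τ.toFun (g l)‖ ≤ ε := by
  classical
  have hmem := mem_closure_hull τ g hg
  rw [Metric.mem_closure_iff] at hmem
  obtain ⟨q, hq, hdist⟩ := hmem ε hε
  rw [convexHull_eq] at hq
  obtain ⟨κ, t, w, z, hw0, hw1, hz, hqq⟩ := hq
  rw [Finset.centerMass_eq_of_sum_1 _ _ hw1] at hqq
  have hzy : ∀ i : t, ∃ y : G, (fun l => g l y) = z i.1 := fun i => hz i.1 i.2
  choose Y hY using hzy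
  refine ⟨⟨∑ i ∈ t.attach, Finsupp.single (Y i) (w i.1), ?_, ?_⟩, ?_⟩
  · intro y
    rw [Finsupp.coe_finset_sum, Finset.sum_apply]
    refine Finset.sum_nonneg fun i _ => ?_
    rw [Finsupp.single_apply]
    split
    · exact hw0 i.1 i.2
    · exact le_refl 0
  · rw [← Finsupp.sum_finset_sum_index (fun _ => rfl) (fun _ _ _ => rfl)]
    rw [Finset.sum_congr rfl (fun i _ => Finsupp.sum_single_index (rfl))]
    rw [Finset.sum_attach t w, hw1]
  · intro l
    have hval : ((∑ i ∈ t.attach, Finsupp.single (Y i) (w i.1)).sum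
        fun y r => (r:ℂ) * g l y) = q l := by
      rw [← Finsupp.sum_finset_sum_index (fun a => by simp) (fun a b₁ b₂ => by push_cast; ring)]
      rw [Finset.sum_congr rfl (fun i _ => Finsupp.sum_single_index (by simp))]
      rw [← hqq]
      rw [← Finset.sum_attach t (fun i => w i • z i)]
      rw [Finset.sum_apply]
      refine Finset.sum_congr rfl fun i _ => ?_
      rw [← hY i]
      simp [Complex.real_smul]
    rw [hval]
    have h1 : ‖q l - τ.toFun (g l)‖ ≤ ‖q - fun l => τ.toFun (g l)‖ := by
      have := norm_le_pi_norm (q - fun l => τ.toFun (g l)) l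
      simpa using this
    have h2 : ‖q - fun l => τ.toFun (g l)‖ = dist (fun l => τ.toFun (g l)) q := by
      rw [dist_eq_norm, ← norm_neg]; congr 1; abel
    rw [h2] at h1
    exact h1.trans hdist.le


end Stmt6Aux

/-- For a countable discrete group `G`, the condition that finite families
of bounded functions admit averaging sequences of finitely supported probability measures
producing positive definite limits is equivalent to the condition that they admit states
`τ` on `ℓ∞(G)` making `x ↦ τ_y(fᵢ(xy) conj(fᵢ(y)))` positive definite. -/
theorem stmt_6 (G : Type*) [Group G] [Countable G] :
    (∀ (n : ℕ) (f : Fin n → G → ℂ), (∀ i, IsBddFun (f i)) →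
        ∃ (μ : ℕ → FinProb G) (ψ : Fin n → G → ℂ), (∀ i, PosDefFun (ψ i)) ∧
          ∀ (i : Fin n) (x : G),
            Filter.Tendsto
              (fun k => (μ k).w.sum fun y r => (r : ℂ) * (f i (x * y) * (starRingEnd ℂ) (f i y)))
              Filter.atTop (nhds (ψ i x))) ↔
    (∀ (n : ℕ) (f : Fin n → G → ℂ), (∀ i, IsBddFun (f i)) →
        ∃ τ : LinftyState G, ∀ i : Fin n,
          PosDefFun (fun x => τ.toFun (fun y => f i (x * y) * (starRingEnd ℂ) (f i y)))) := by
  constructor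
  · intro h1 n f hf
    obtain ⟨μ, ψ, hψ, htend⟩ := h1 n f hf
    refine ⟨Stmt6Aux.stateOf μ, fun i => ?_⟩
    have heq : (fun x => (Stmt6Aux.stateOf μ).toFun
        (fun y => f i (x * y) * (starRingEnd ℂ) (f i y))) = ψ i := by
      funext x
      have hb := Stmt6Aux.bdd_conv (hf i) x
      have h1' := Stmt6Aux.tendsto_tauOf μ hb
      have hle : (Filter.hyperfilter ℕ : Filter ℕ) ≤ Filter.atTop :=
        le_of_le_of_eq Filter.hyperfilter_le_cofinite Nat.cofinite_eq_atTop
      have h2 : Filter.Tendsto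
          (Stmt6Aux.Sseq μ (fun y => f i (x * y) * (starRingEnd ℂ) (f i y)))
          (Filter.hyperfilter ℕ : Filter ℕ) (nhds (ψ i x)) := (htend i x).mono_left hle
      exact tendsto_nhds_unique h1' h2
    rw [heq]
    exact hψ i
  · intro h2 n f hf
    obtain ⟨τ, hτ⟩ := h2 n f hf
    obtain ⟨e, he⟩ := exists_surjective_nat G
    have hsel : ∀ k : ℕ, ∃ μ : FinProb G, ∀ (i : Fin n) (j : Fin (k+1)),
        ‖(μ.w.sum fun y r => (r:ℂ) * (f i (e j.1 * y) * (starRingEnd ℂ) (f i y)))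
          - τ.toFun (fun y => f i (e j.1 * y) * (starRingEnd ℂ) (f i y))‖ ≤ 1/(k+1) := by
      intro k
      have hpos : (0:ℝ) < 1/(k+1) := by positivity
      obtain ⟨μ, hμ⟩ := Stmt6Aux.state_approx τ
        (fun p : Fin n × Fin (k+1) => fun y => f p.1 (e p.2.1 * y) * (starRingEnd ℂ) (f p.1 y))
        (fun p => Stmt6Aux.bdd_conv (hf p.1) (e p.2.1)) hpos
      exact ⟨μ, fun i j => hμ (i, j)⟩
    choose μ hμ using hsel
    refine ⟨μ, fun i x => τ.toFun (fun y => f i (x * y) * (starRingEnd ℂ) (f i y)),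
      fun i => hτ i, ?_⟩
    intro i x
    obtain ⟨j0, hj0⟩ := he x
    have hbound : ∀ k, j0 ≤ k →
        ‖((μ k).w.sum fun y r => (r:ℂ) * (f i (x * y) * (starRingEnd ℂ) (f i y)))
          - τ.toFun (fun y => f i (x * y) * (starRingEnd ℂ) (f i y))‖ ≤ 1/(k+1) := by
      intro k hk
      have hj : j0 < k + 1 := Nat.lt_succ_of_le hk
      have := hμ k i ⟨j0, hj⟩
      simpa [hj0] using this
    rw [← tendsto_sub_nhds_zero_iff]
    apply squeeze_zero_norm' ((Filter.eventually_ge_atTop j0).mono hbound)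
    exact tendsto_one_div_add_atTop_nhds_zero_nat
end

section
/- Let G be a countable discrete group. The following are equivalent: (1) G is amenable; (2) for every finite family of bounded functions f_1,…,f_n: G → ℂ, there exists a state τ on ℓ∞(G) such that each of the functions x ↦ τ_y( f_i(xy) · conj(f_i(y)) ) (where τ is applied to the bounded function of the variable y) is positive definite on G. -/
open scoped ComplexOrder

/-- `G` is amenable: there is a left-invariant mean (state) on `ℓ∞(G)`. -/
def Amenable (G : Type*) [Group G] : Prop :=
  ∃ τ : LinftyState G, ∀ (s : G) (f : G → ℂ), IsBddFun f →
    τ.toFun (fun x => f (s * x)) = τ.toFun f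

/-!
An invariant mean `τ` makes `x ↦ τ_y(f(xy) conj f(y))` positive definite: after translating each
term by `xⱼ`, the quadratic form becomes `τ(|∑ᵢ conj cᵢ f(xᵢ⁻¹ ·)|²) ≥ 0`.

Conversely, apply the hypothesis to the perturbations `1 + ε f`. Positive definiteness at the
points `1, s` with coefficients `1, -1` gives, at first order in `ε`,
`Re (τ(f(s·)) + τ(f(s⁻¹·)) - 2 τ(f)) ≤ O(ε)`. An ultrafilter limit of such states, along finite
sets of functions and `ε → 0`, is a state `σ` whose second differences have nonpositive real
part; applied to `c • f` for all `c ∈ ℂ` this forces them to vanish. Then `n ↦ σ(f(sⁿ ·))` is a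
bounded arithmetic progression, hence constant, so `σ` is left invariant.
-/

open Filter Topology ComplexConjugate

section BoundedFunctions

variable {G : Type*}

def boundedFuns (G : Type*) : Submodule ℂ (G → ℂ) where
  carrier := {f | IsBddFun f}
  zero_mem' := ⟨0, fun _ => by simp⟩
  add_mem' := by
    rintro f g ⟨C, hC⟩ ⟨D, hD⟩
    exact ⟨C + D, fun x => (norm_add_le _ _).trans (add_le_add (hC x) (hD x))⟩
  smul_mem' := by
    rintro c f ⟨C, hC⟩
    exact ⟨‖c‖ * C, fun x => by
      simpa [norm_smul] using mul_le_mul_of_nonneg_left (hC x) (norm_nonneg c)⟩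

theorem const_mem_boundedFuns (c : ℂ) : (fun _ : G => c) ∈ boundedFuns G :=
  ⟨‖c‖, fun _ => le_rfl⟩

theorem mul_mem_boundedFuns {f g : G → ℂ} (hf : f ∈ boundedFuns G) (hg : g ∈ boundedFuns G) :
    (fun x => f x * g x) ∈ boundedFuns G := by
  obtain ⟨C, hC⟩ := hf
  obtain ⟨D, hD⟩ := hg
  refine ⟨max C 0 * max D 0, fun x => ?_⟩
  rw [norm_mul]
  exact mul_le_mul ((hC x).trans (le_max_left _ _)) ((hD x).trans (le_max_left _ _))
    (norm_nonneg _) (le_max_right _ _)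

theorem comp_mem_boundedFuns {f : G → ℂ} (hf : f ∈ boundedFuns G) (φ : G → G) :
    (fun x => f (φ x)) ∈ boundedFuns G := by
  obtain ⟨C, hC⟩ := hf
  exact ⟨C, fun x => hC (φ x)⟩

theorem conj_mem_boundedFuns {f : G → ℂ} (hf : f ∈ boundedFuns G) :
    (fun x => conj (f x)) ∈ boundedFuns G := by
  obtain ⟨C, hC⟩ := hf
  exact ⟨C, fun x => by simpa using hC x⟩

end BoundedFunctions

namespace LinftyState

variable {G : Type*} (τ : LinftyState G)

def toLinearMap : boundedFuns G →ₗ[ℂ] ℂ where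
  toFun f := τ.toFun f
  map_add' f g := τ.map_add f g f.2 g.2
  map_smul' c f := τ.map_smul c f f.2

theorem map_sum {ι : Type*} (s : Finset ι) (f : ι → G → ℂ)
    (hf : ∀ i ∈ s, f i ∈ boundedFuns G) :
    τ.toFun (∑ i ∈ s, f i) = ∑ i ∈ s, τ.toFun (f i) := by
  have hsum : ∑ i ∈ s, f i = ((∑ i : s, ⟨f i, hf i i.2⟩ : boundedFuns G) : G → ℂ) := by
    rw [Submodule.coe_sum, Finset.sum_coe_sort s f]
  rw [hsum]
  exact (_root_.map_sum τ.toLinearMap _ _).trans (Finset.sum_coe_sort s fun i => τ.toFun (f i))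

theorem map_sub {f g : G → ℂ} (hf : f ∈ boundedFuns G) (hg : g ∈ boundedFuns G) :
    τ.toFun (f - g) = τ.toFun f - τ.toFun g :=
  _root_.map_sub τ.toLinearMap ⟨f, hf⟩ ⟨g, hg⟩

theorem map_const (c : ℂ) : τ.toFun (fun _ => c) = c := by
  have hc : (fun _ : G => c) = c • fun _ => 1 := by
    funext
    simp
  rw [hc, τ.map_smul c _ (const_mem_boundedFuns 1), τ.unital, mul_one]

theorem mono {f g : G → ℂ} (hf : f ∈ boundedFuns G) (hg : g ∈ boundedFuns G)
    (hfg : ∀ x, f x ≤ g x) : τ.toFun f ≤ τ.toFun g := by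
  rw [← sub_nonneg, ← τ.map_sub hg hf]
  exact τ.pos _ (sub_mem hg hf) fun x => sub_nonneg.2 (hfg x)

theorem norm_map_ofReal_le {v : G → ℝ} {C : ℝ} (hv : ∀ x, |v x| ≤ C) :
    ‖τ.toFun (fun x => (v x : ℂ))‖ ≤ C := by
  have hb : (fun x => (v x : ℂ)) ∈ boundedFuns G := ⟨C, fun x => by simpa using hv x⟩
  have lower := τ.mono (const_mem_boundedFuns _) hb fun x =>
    Complex.real_le_real.2 (neg_le_of_abs_le (hv x))
  have upper := τ.mono hb (const_mem_boundedFuns _) fun x =>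
    Complex.real_le_real.2 (le_of_abs_le (hv x))
  rw [map_const] at lower upper
  obtain ⟨hre, him⟩ := Complex.le_def.1 upper
  obtain ⟨hre', -⟩ := Complex.le_def.1 lower
  simp only [Complex.ofReal_re, Complex.ofReal_im] at hre hre' him
  have hreal : τ.toFun (fun x => (v x : ℂ)) = ((τ.toFun fun x => (v x : ℂ)).re : ℂ) :=
    Complex.ext rfl (by simpa using him)
  rw [hreal, Complex.norm_real, Real.norm_eq_abs]
  exact abs_le.2 ⟨hre', hre⟩

theorem norm_map_le {f : G → ℂ} {C : ℝ} (hf : ∀ x, ‖f x‖ ≤ C) : ‖τ.toFun f‖ ≤ 2 * C := by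
  have hre : ∀ x, |(f x).re| ≤ C := fun x => (Complex.abs_re_le_norm _).trans (hf x)
  have him : ∀ x, |(f x).im| ≤ C := fun x => (Complex.abs_im_le_norm _).trans (hf x)
  have hb : ∀ {v : G → ℝ}, (∀ x, |v x| ≤ C) → (fun x => (v x : ℂ)) ∈ boundedFuns G :=
    fun hv => ⟨C, fun x => by simpa using hv x⟩
  have hdecomp : f = (fun x => ((f x).re : ℂ)) + Complex.I • fun x => ((f x).im : ℂ) := by
    funext x
    simp [mul_comm Complex.I, Complex.re_add_im]
  rw [hdecomp, τ.map_add _ _ (hb hre) (Submodule.smul_mem _ _ (hb him)), τ.map_smul _ _ (hb him)]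
  calc _ ≤ C + C := (norm_add_le _ _).trans <| by
        rw [norm_mul, Complex.norm_I, one_mul]
        exact add_le_add (τ.norm_map_ofReal_le hre) (τ.norm_map_ofReal_le him)
    _ = 2 * C := by ring

end LinftyState

theorem LinftyState.exists_tendsto_of_ultrafilter {G ι : Type*} (U : Ultrafilter ι)
    (τ : ι → LinftyState G) :
    ∃ σ : LinftyState G, ∀ f ∈ boundedFuns G,
      Tendsto (fun i => (τ i).toFun f) U (𝓝 (σ.toFun f)) := by
  have hlim : ∀ f ∈ boundedFuns G,
      Tendsto (fun i => (τ i).toFun f) U (𝓝 (limUnder U fun i => (τ i).toFun f)) := by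
    rintro f ⟨C, hC⟩
    have hball : ∀ i, (τ i).toFun f ∈ Metric.closedBall 0 (2 * C) := fun i => by
      simpa using (τ i).norm_map_le hC
    obtain ⟨z, -, hz⟩ := (isCompact_closedBall (0 : ℂ) (2 * C)).ultrafilter_le_nhds
      (U.map fun i => (τ i).toFun f) (le_principal_iff.2 <| Filter.mem_map.2 <| univ_mem' hball)
    exact tendsto_nhds_limUnder ⟨z, hz⟩
  refine ⟨⟨fun f => limUnder U fun i => (τ i).toFun f, ?_, ?_, ?_, ?_⟩, hlim⟩
  · intro f g hf hg
    refine tendsto_nhds_unique (hlim _ (add_mem hf hg)) ?_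
    simpa only [(τ _).map_add f g hf hg] using (hlim f hf).add (hlim g hg)
  · intro c f hf
    refine tendsto_nhds_unique (hlim _ (Submodule.smul_mem _ c hf)) ?_
    simpa only [(τ _).map_smul c f hf] using (hlim f hf).const_mul c
  · intro f hf hpos
    exact isClosed_Ici.mem_of_tendsto (hlim f hf) (univ_mem' fun i => (τ i).pos f hf hpos)
  · simp only [LinftyState.unital]
    exact tendsto_const_nhds.limUnder_eq

theorem eq_of_add_eq_two_nsmul_of_norm_le {E : Type*} [NormedAddCommGroup E] [NormedSpace ℝ E]
    {a : ℕ → E} (hrec : ∀ n, a (n + 2) + a n = 2 • a (n + 1)) {C : ℝ} (hC : ∀ n, ‖a n‖ ≤ C) :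
    a 1 = a 0 := by
  have hstep : ∀ n, a (n + 1) - a n = a 1 - a 0 := by
    intro n
    induction n with
    | zero => rfl
    | succ n ih => rw [← ih, sub_eq_sub_iff_add_eq_add, hrec, two_nsmul]
  have hlin : ∀ n : ℕ, n • (a 1 - a 0) = a n - a 0 := by
    intro n
    induction n with
    | zero => simp
    | succ n ih => rw [succ_nsmul, ih, ← hstep n]; abel
  by_contra hne
  have hd : 0 < ‖a 1 - a 0‖ := norm_pos_iff.2 (sub_ne_zero.2 hne)
  obtain ⟨n, hn⟩ := exists_nat_gt (2 * C / ‖a 1 - a 0‖)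
  have hgrowth : n * ‖a 1 - a 0‖ ≤ 2 * C := by
    calc n * ‖a 1 - a 0‖ = ‖a n - a 0‖ := by rw [← hlin n, RCLike.norm_nsmul ℝ, nsmul_eq_mul]
      _ ≤ ‖a n‖ + ‖a 0‖ := norm_sub_le _ _
      _ ≤ 2 * C := by linarith [hC n, hC 0]
  rw [div_lt_iff₀ hd] at hn
  linarith

theorem PosDefFun.zero_le_two_mul_sub_sub {G : Type*} [Group G] {ψ : G → ℂ} (hψ : PosDefFun ψ)
    (s : G) : 0 ≤ 2 * ψ 1 - ψ s - ψ s⁻¹ := by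
  have h := hψ 2 ![1, s] ![1, -1]
  simp only [Fin.sum_univ_two, Matrix.cons_val_zero, Matrix.cons_val_one, map_one, map_neg,
    inv_one, one_mul, mul_one, neg_one_mul, mul_neg, neg_neg, inv_mul_cancel] at h
  convert h using 1
  ring

namespace LinftyState

variable {G : Type*} [Group G] (τ : LinftyState G)

def autocorrelation (f : G → ℂ) : G → ℂ :=
  fun x => τ.toFun fun y => f (x * y) * conj (f y)

theorem posDefFun_autocorrelation
    (hτ : ∀ (s : G) (f : G → ℂ), IsBddFun f → τ.toFun (fun x => f (s * x)) = τ.toFun f)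
    {f : G → ℂ} (hf : f ∈ boundedFuns G) : PosDefFun (τ.autocorrelation f) := by
  intro n x c
  set k : Fin n → Fin n → G → ℂ := fun i j y => f ((x i)⁻¹ * y) * conj (f ((x j)⁻¹ * y))
  have hk : ∀ i j, k i j ∈ boundedFuns G := fun i j =>
    mul_mem_boundedFuns (comp_mem_boundedFuns hf _)
      (conj_mem_boundedFuns (comp_mem_boundedFuns hf _))
  have htranslate : ∀ i j, τ.autocorrelation f ((x i)⁻¹ * x j) = τ.toFun (k i j) := by
    intro i j
    rw [← hτ (x j) _ (hk i j)]
    simp only [autocorrelation, k, mul_assoc, inv_mul_cancel_left]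
  set F : G → ℂ := ∑ i, conj (c i) • fun y => f ((x i)⁻¹ * y)
  have hF : F ∈ boundedFuns G :=
    Submodule.sum_mem _ fun i _ => Submodule.smul_mem _ _ (comp_mem_boundedFuns hf _)
  have hFF : (fun y => F y * conj (F y)) = ∑ i, ∑ j, (conj (c i) * c j) • k i j := by
    funext y
    simp only [F, k, Finset.sum_apply, Pi.smul_apply, smul_eq_mul, _root_.map_sum, map_mul,
      Complex.conj_conj, Finset.sum_mul_sum]
    exact Finset.sum_congr rfl fun i _ => Finset.sum_congr rfl fun j _ => by ring
  have hsum : ∑ i, ∑ j, conj (c i) * c j * τ.autocorrelation f ((x i)⁻¹ * x j)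
      = τ.toFun fun y => F y * conj (F y) := by
    rw [hFF, τ.map_sum _ _ fun i _ =>
      Submodule.sum_mem _ fun j _ => Submodule.smul_mem _ _ (hk i j)]
    refine Finset.sum_congr rfl fun i _ => ?_
    rw [τ.map_sum _ _ fun j _ => Submodule.smul_mem _ _ (hk i j)]
    exact Finset.sum_congr rfl fun j _ => by rw [htranslate, τ.map_smul _ _ (hk i j)]
  rw [hsum]
  refine τ.pos _ (mul_mem_boundedFuns hF (conj_mem_boundedFuns hF)) fun y => ?_
  rw [Complex.mul_conj]
  exact Complex.zero_le_real.2 (Complex.normSq_nonneg _)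

def secondDiff (f : G → ℂ) (s : G) : ℂ :=
  τ.toFun (fun y => f (s * y)) + τ.toFun (fun y => f (s⁻¹ * y)) - 2 * τ.toFun f

theorem secondDiff_smul (c : ℂ) {f : G → ℂ} (hf : f ∈ boundedFuns G) (s : G) :
    τ.secondDiff (c • f) s = c * τ.secondDiff f s := by
  change τ.toFun (c • fun y => f (s * y)) + τ.toFun (c • fun y => f (s⁻¹ * y))
    - 2 * τ.toFun (c • f) = _
  rw [τ.map_smul c _ (comp_mem_boundedFuns hf _), τ.map_smul c _ (comp_mem_boundedFuns hf _),
    τ.map_smul c _ hf, secondDiff]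
  ring

theorem norm_autocorrelation_le {f : G → ℂ} {C : ℝ} (hf : ∀ y, ‖f y‖ ≤ C) (x : G) :
    ‖τ.autocorrelation f x‖ ≤ 2 * C ^ 2 := by
  have hC : 0 ≤ C := (norm_nonneg _).trans (hf 1)
  refine τ.norm_map_le fun y => ?_
  rw [norm_mul, Complex.norm_conj, sq]
  exact mul_le_mul (hf _) (hf _) (norm_nonneg _) hC

theorem autocorrelation_one_add_mul {f : G → ℂ} (hf : f ∈ boundedFuns G) (ε : ℝ) (x : G) :
    τ.autocorrelation (fun y => 1 + ε * f y) x
      = 1 + ε * τ.toFun (fun y => f (x * y)) + ε * τ.toFun (fun y => conj (f y))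
        + ε ^ 2 * τ.autocorrelation f x := by
  have h1 := comp_mem_boundedFuns hf (x * ·)
  have h2 := conj_mem_boundedFuns hf
  have h3 := mul_mem_boundedFuns h1 h2
  have hexpand : (fun y => (1 + ε * f (x * y)) * conj (1 + ε * f y))
      = (fun _ => 1) + (ε : ℂ) • (fun y => f (x * y)) + (ε : ℂ) • (fun y => conj (f y))
        + ((ε : ℂ) ^ 2) • (fun y => f (x * y) * conj (f y)) := by
    funext y
    simp only [Pi.add_apply, Pi.smul_apply, smul_eq_mul, _root_.map_add, map_mul, map_one,
      Complex.conj_ofReal]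
    ring
  have hs := fun (c : ℂ) {g : G → ℂ} (hg : g ∈ boundedFuns G) => Submodule.smul_mem _ c hg
  rw [autocorrelation, hexpand,
    τ.map_add _ _ (add_mem (add_mem (const_mem_boundedFuns 1) (hs _ h1)) (hs _ h2)) (hs _ h3),
    τ.map_add _ _ (add_mem (const_mem_boundedFuns 1) (hs _ h1)) (hs _ h2),
    τ.map_add _ _ (const_mem_boundedFuns 1) (hs _ h1), τ.unital,
    τ.map_smul _ _ h1, τ.map_smul _ _ h2, τ.map_smul _ _ h3, autocorrelation]

theorem re_secondDiff_le {f : G → ℂ} {C : ℝ} (hf : ∀ y, ‖f y‖ ≤ C) {ε : ℝ} (hε : 0 < ε)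
    (hpd : PosDefFun (τ.autocorrelation fun y => 1 + ε * f y)) (s : G) :
    (τ.secondDiff f s).re ≤ 8 * C ^ 2 * ε := by
  have hpos := hpd.zero_le_two_mul_sub_sub s
  simp only [τ.autocorrelation_one_add_mul ⟨C, hf⟩, one_mul] at hpos
  set A := τ.autocorrelation f
  -- the `conj f` terms cancel: only the second difference survives at first order in `ε`
  have hexpand :
      0 ≤ -ε * (τ.secondDiff f s).re + ε ^ 2 * (2 * (A 1).re - (A s).re - (A s⁻¹).re) := by
    convert (Complex.le_def.1 hpos).1 using 1
    · exact Complex.zero_re.symm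
    simp only [secondDiff, Complex.sub_re, Complex.add_re, Complex.mul_re, Complex.ofReal_re,
      Complex.ofReal_im, Complex.re_ofNat, Complex.im_ofNat, Complex.one_re, ← Complex.ofReal_pow]
    ring
  have hA : 2 * (A 1).re - (A s).re - (A s⁻¹).re ≤ 8 * C ^ 2 := by
    have h := fun x => (abs_le.1 ((Complex.abs_re_le_norm (A x)).trans
      (τ.norm_autocorrelation_le hf x)))
    linarith [(h 1).2, (h s).1, (h s⁻¹).1]
  nlinarith

theorem secondDiff_eq_zero_of_re_nonpos (σ : LinftyState G)
    (h : ∀ f ∈ boundedFuns G, ∀ s, (σ.secondDiff f s).re ≤ 0)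
    {f : G → ℂ} (hf : f ∈ boundedFuns G) (s : G) : σ.secondDiff f s = 0 := by
  have hconj := h _ (Submodule.smul_mem _ (conj (σ.secondDiff f s)) hf) s
  rw [σ.secondDiff_smul _ hf, Complex.conj_mul', ← Complex.ofReal_pow, Complex.ofReal_re] at hconj
  exact norm_eq_zero.1 (pow_eq_zero_iff two_ne_zero |>.1 (le_antisymm hconj (sq_nonneg _)))

theorem map_mul_left_of_secondDiff_eq_zero (σ : LinftyState G)
    (h : ∀ f ∈ boundedFuns G, ∀ s, σ.secondDiff f s = 0) (s : G) {f : G → ℂ}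
    (hf : f ∈ boundedFuns G) : σ.toFun (fun x => f (s * x)) = σ.toFun f := by
  obtain ⟨C, hC⟩ := hf
  set a : ℕ → ℂ := fun n => σ.toFun fun y => f (s ^ n * y)
  have hrec : ∀ n, a (n + 2) + a n = 2 • a (n + 1) := by
    intro n
    have hΔ := h _ (comp_mem_boundedFuns ⟨C, hC⟩ (s ^ (n + 1) * ·)) s
    have hinv : s ^ (n + 1) * s⁻¹ = s ^ n := by rw [pow_succ, mul_inv_cancel_right]
    simp only [secondDiff, ← mul_assoc, ← pow_succ, hinv] at hΔ
    rw [two_nsmul]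
    linear_combination hΔ
  have hconst := eq_of_add_eq_two_nsmul_of_norm_le hrec fun n => σ.norm_map_le fun y => hC _
  simpa [a] using hconst

theorem exists_forall_mem_posDefFun
    (h : ∀ (n : ℕ) (f : Fin n → G → ℂ), (∀ i, IsBddFun (f i)) →
      ∃ τ : LinftyState G, ∀ i : Fin n, PosDefFun (τ.autocorrelation (f i)))
    {ι : Type*} (S : Finset ι) (F : ι → G → ℂ) (hF : ∀ i ∈ S, F i ∈ boundedFuns G) :
    ∃ τ : LinftyState G, ∀ i ∈ S, PosDefFun (τ.autocorrelation (F i)) := by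
  obtain ⟨τ, hτ⟩ := h S.card (fun k => F (S.equivFin.symm k)) fun k => hF _ (S.equivFin.symm k).2
  refine ⟨τ, fun i hi => ?_⟩
  simpa using hτ (S.equivFin ⟨i, hi⟩)

theorem exists_forall_re_secondDiff_nonpos
    (h : ∀ (S : Finset (boundedFuns G)) (ε : ℝ), ∃ τ : LinftyState G,
      ∀ f ∈ S, PosDefFun (τ.autocorrelation fun y => 1 + ε * (f : G → ℂ) y)) :
    ∃ σ : LinftyState G, ∀ f ∈ boundedFuns G, ∀ s, (σ.secondDiff f s).re ≤ 0 := by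
  classical
  choose τ hτ using fun p : Finset (boundedFuns G) × ℕ => h p.1 (1 / (p.2 + 1))
  let U : Ultrafilter (Finset (boundedFuns G) × ℕ) := .of atTop
  obtain ⟨σ, hσ⟩ := exists_tendsto_of_ultrafilter U τ
  refine ⟨σ, fun f hf s => ?_⟩
  obtain ⟨C, hC⟩ := hf
  have hlim : Tendsto (fun p => ((τ p).secondDiff f s).re) U (𝓝 (σ.secondDiff f s).re) :=
    Complex.continuous_re.continuousAt.tendsto.comp <|
      ((hσ _ (comp_mem_boundedFuns ⟨C, hC⟩ _)).add (hσ _ (comp_mem_boundedFuns ⟨C, hC⟩ _))).sub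
        ((hσ f ⟨C, hC⟩).const_mul 2)
  have hbound : Tendsto (fun p : Finset (boundedFuns G) × ℕ => 8 * C ^ 2 * (1 / (p.2 + 1)))
      U (𝓝 0) := by
    have hsnd : Tendsto (fun p : Finset (boundedFuns G) × ℕ => p.2) U atTop :=
      (tendsto_snd.mono_left prod_atTop_atTop_eq.ge).mono_left (Ultrafilter.of_le atTop)
    simpa only [mul_zero, Function.comp_def] using
      ((tendsto_one_div_add_atTop_nhds_zero_nat (𝕜 := ℝ)).comp hsnd).const_mul (8 * C ^ 2)
  have hle : ∀ᶠ p in U, ((τ p).secondDiff f s).re ≤ 8 * C ^ 2 * (1 / (p.2 + 1)) := by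
    have hmem : ∀ᶠ p : Finset (boundedFuns G) × ℕ in U, ⟨f, ⟨C, hC⟩⟩ ∈ p.1 :=
      Ultrafilter.of_le atTop <|
        (eventually_ge_atTop (({⟨f, ⟨C, hC⟩⟩} : Finset (boundedFuns G)), 0)).mono fun p hp =>
          Finset.singleton_subset_iff.1 hp.1
    filter_upwards [hmem] with p hp
    have hε : (0 : ℝ) < 1 / (p.2 + 1) := by positivity
    have hpd := hτ p _ hp
    exact (τ p).re_secondDiff_le hC hε hpd s
  exact le_of_tendsto_of_tendsto hlim hbound hle

end LinftyState

theorem stmt_7_general (G : Type*) [Group G] :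
    Amenable G ↔
      ∀ (n : ℕ) (f : Fin n → G → ℂ), (∀ i, IsBddFun (f i)) →
        ∃ τ : LinftyState G, ∀ i : Fin n,
          PosDefFun (fun x => τ.toFun (fun y => f i (x * y) * (starRingEnd ℂ) (f i y))) := by
  constructor
  · rintro ⟨τ, hτ⟩ n f hf
    exact ⟨τ, fun i => τ.posDefFun_autocorrelation hτ (hf i)⟩
  · intro h
    obtain ⟨σ, hσ⟩ := LinftyState.exists_forall_re_secondDiff_nonpos fun S ε =>
      LinftyState.exists_forall_mem_posDefFun h S _ fun f _ =>
        add_mem (const_mem_boundedFuns 1) (Submodule.smul_mem _ (ε : ℂ) f.2)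
    exact ⟨σ, fun s f hf => σ.map_mul_left_of_secondDiff_eq_zero
      (fun f hf s => σ.secondDiff_eq_zero_of_re_nonpos hσ hf s) s hf⟩

/-- A countable discrete group `G` is amenable iff for every finite family
of bounded functions `f₁,…,fₙ : G → ℂ` there is a state `τ` on `ℓ∞(G)` such that each
function `x ↦ τ_y(fᵢ(xy) conj(fᵢ(y)))` is positive definite on `G`. -/
theorem stmt_7 (G : Type*) [Group G] [Countable G] :
    Amenable G ↔
      ∀ (n : ℕ) (f : Fin n → G → ℂ), (∀ i, IsBddFun (f i)) →
        ∃ τ : LinftyState G, ∀ i : Fin n,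
          PosDefFun (fun x => τ.toFun (fun y => f i (x * y) * (starRingEnd ℂ) (f i y))) :=
  stmt_7_general G
end

section
/- Let G be a countable discrete group admitting a paradoxical decomposition: there exist elements s_1,…,s_n, t_1,…,t_m ∈ G and pairwise disjoint subsets A_1,…,A_n, B_1,…,B_m ⊆ G such that the translates s_1A_1,…,s_nA_n form a partition of G and the translates t_1B_1,…,t_mB_m form a partition of G. Then it is NOT the case that for every finite family of bounded functions f_1,…,f_N: G → ℂ there exists a state τ on ℓ∞(G) such that each function x ↦ τ_y( f_i(xy) · conj(f_i(y)) ) is positive definite on G. -/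
open scoped ComplexOrder Pointwise

/-!
A state `τ` assigns every subset `E` a finitely additive mass `τ(1_E) ∈ [0, 1]`. If
`x ↦ τ_y (f (x y) · conj (f y))` is positive definite it is Hermitian, and applying this to
`f = 1_C + 1_{σC}` and `f = 1_C + i · 1_{σC}` at `x = σ` forces `τ(1_{σC}) = τ(1_C)`. Choosing
these functions for all pieces of a paradoxical decomposition at once, the pieces `Aᵢ` and `Bⱼ`
get the masses of their translates, which sum to `1` over each family; so the disjoint union
of all pieces has mass `2 > 1`.
-/

section

open Function

variable {G : Type*}

theorem IsBddFun.add {f g : G → ℂ} (hf : IsBddFun f) (hg : IsBddFun g) : IsBddFun (f + g) := by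
  obtain ⟨C, hC⟩ := hf
  obtain ⟨D, hD⟩ := hg
  exact ⟨C + D, fun x => (norm_add_le _ _).trans (add_le_add (hC x) (hD x))⟩

theorem IsBddFun.const_smul {f : G → ℂ} (hf : IsBddFun f) (c : ℂ) : IsBddFun (c • f) := by
  obtain ⟨C, hC⟩ := hf
  refine ⟨‖c‖ * C, fun x => ?_⟩
  rw [Pi.smul_apply, smul_eq_mul, norm_mul]
  exact mul_le_mul_of_nonneg_left (hC x) (norm_nonneg c)

theorem IsBddFun.mul {f g : G → ℂ} (hf : IsBddFun f) (hg : IsBddFun g) : IsBddFun (f * g) := by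
  obtain ⟨C, hC⟩ := hf
  obtain ⟨D, hD⟩ := hg
  refine ⟨C * D, fun x => ?_⟩
  rw [Pi.mul_apply, norm_mul]
  exact mul_le_mul (hC x) (hD x) (norm_nonneg _) ((norm_nonneg _).trans (hC x))

theorem IsBddFun.comp {H : Type*} {f : G → ℂ} (hf : IsBddFun f) (φ : H → G) :
    IsBddFun (f ∘ φ) := by
  obtain ⟨C, hC⟩ := hf
  exact ⟨C, fun x => hC (φ x)⟩

theorem IsBddFun.conj {f : G → ℂ} (hf : IsBddFun f) : IsBddFun (starRingEnd ℂ ∘ f) := by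
  obtain ⟨C, hC⟩ := hf
  exact ⟨C, fun x => by simpa using hC x⟩

theorem isBddFun_indicator_one (E : Set G) : IsBddFun (E.indicator 1) :=
  ⟨1, fun x => by by_cases hx : x ∈ E <;> simp [hx]⟩

theorem IsBddFun.translate_mul_conj [Mul G] {g h : G → ℂ} (hg : IsBddFun g) (hh : IsBddFun h)
    (x : G) : IsBddFun fun y => g (x * y) * starRingEnd ℂ (h y) :=
  (hg.comp (x * ·)).mul hh.conj

theorem indicator_one_nonneg (E : Set G) (y : G) : 0 ≤ E.indicator (1 : G → ℂ) y :=
  Set.indicator_nonneg (fun _ _ => zero_le_one) y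

theorem PosDefFun.apply_inv [Group G] {ψ : G → ℂ} (hψ : PosDefFun ψ) (x : G) :
    ψ x⁻¹ = starRingEnd ℂ (ψ x) := by
  have h₁ := hψ 1 ![1] ![1]
  have h₂ := hψ 2 ![1, x] ![1, 1]
  have h₃ := hψ 2 ![1, x] ![1, Complex.I]
  simp only [Fin.sum_univ_two, Fin.sum_univ_one, Complex.nonneg_iff] at h₁ h₂ h₃
  simp only [Fin.isValue, Matrix.cons_val_fin_one, map_one, mul_one, inv_one, one_mul,
    Matrix.cons_val_zero, Matrix.cons_val_one, inv_mul_cancel, Complex.add_re, Complex.add_im,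
    Complex.conj_I, neg_mul, Complex.I_mul_I, neg_neg, Complex.mul_re, Complex.I_re, zero_mul,
    Complex.I_im, zero_sub, Complex.neg_re, Complex.mul_im, zero_add, Complex.neg_im] at h₁ h₂ h₃
  apply Complex.ext <;> simp <;> linarith

namespace LinftyState

variable (τ : LinftyState G)

theorem map_zero : τ.toFun 0 = 0 := by
  simpa using τ.map_smul 0 _ (isBddFun_indicator_one ∅)

def corr [Mul G] (g h : G → ℂ) (x : G) : ℂ :=
  τ.toFun fun y => g (x * y) * starRingEnd ℂ (h y)

noncomputable def mass (E : Set G) : ℂ := τ.toFun (E.indicator 1)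

theorem mass_nonneg (E : Set G) : 0 ≤ τ.mass E :=
  τ.pos _ (isBddFun_indicator_one E) (indicator_one_nonneg E)

theorem mass_univ : τ.mass Set.univ = 1 := by
  rw [mass, Set.indicator_univ]
  exact τ.unital

theorem mass_empty : τ.mass ∅ = 0 := by
  rw [mass, Set.indicator_empty]
  exact τ.map_zero

theorem mass_union {E F : Set G} (h : Disjoint E F) :
    τ.mass (E ∪ F) = τ.mass E + τ.mass F := by
  rw [mass, Set.indicator_union_of_disjoint h]
  exact τ.map_add _ _ (isBddFun_indicator_one E) (isBddFun_indicator_one F)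

theorem mass_le_one (E : Set G) : τ.mass E ≤ 1 := by
  rw [← τ.mass_univ, ← Set.union_compl_self E, τ.mass_union disjoint_compl_right]
  exact le_add_of_nonneg_right (τ.mass_nonneg _)

theorem mass_biUnion {ι : Type*} (s : Finset ι) {E : ι → Set G}
    (hE : (s : Set ι).PairwiseDisjoint E) :
    τ.mass (⋃ i ∈ s, E i) = ∑ i ∈ s, τ.mass (E i) := by
  classical
  induction s using Finset.induction_on with
  | empty => simp [mass_empty]
  | insert i s hi ih =>
    rw [Finset.coe_insert, Set.pairwiseDisjoint_insert_of_notMem (Finset.mem_coe.not.2 hi)] at hE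
    have hdisj : Disjoint (E i) (⋃ j ∈ s, E j) := Set.disjoint_iUnion₂_right.mpr hE.2
    rw [Finset.set_biUnion_insert, τ.mass_union hdisj, ih hE.1, Finset.sum_insert hi]

theorem mass_iUnion {ι : Type*} [Fintype ι] {E : ι → Set G} (hE : Pairwise (Disjoint on E)) :
    τ.mass (⋃ i, E i) = ∑ i, τ.mass (E i) := by
  simpa using τ.mass_biUnion Finset.univ (hE.set_pairwise _)

theorem corr_add_smul_self [Mul G] {g h : G → ℂ} (hg : IsBddFun g) (hh : IsBddFun h) (z : ℂ)
    (x : G) :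
    τ.corr (g + z • h) (g + z • h) x = τ.corr g g x + starRingEnd ℂ z * τ.corr g h x
      + z * τ.corr h g x + z * starRingEnd ℂ z * τ.corr h h x := by
  have hb {u v : G → ℂ} (hu : IsBddFun u) (hv : IsBddFun v) := hu.translate_mul_conj hv x
  have hsplit : (fun y => (g + z • h) (x * y) * starRingEnd ℂ ((g + z • h) y)) =
      (fun y => g (x * y) * starRingEnd ℂ (g y)) +
        (starRingEnd ℂ z • (fun y => g (x * y) * starRingEnd ℂ (h y)) +
          (z • (fun y => h (x * y) * starRingEnd ℂ (g y)) +
            (z * starRingEnd ℂ z) • fun y => h (x * y) * starRingEnd ℂ (h y))) := by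
    funext y
    simp only [Pi.add_apply, Pi.smul_apply, smul_eq_mul, _root_.map_add, _root_.map_mul]
    ring
  simp only [corr]
  rw [hsplit, τ.map_add _ _ (hb hg hg) (((hb hg hh).const_smul _).add
      (((hb hh hg).const_smul _).add ((hb hh hh).const_smul _))),
    τ.map_add _ _ ((hb hg hh).const_smul _) (((hb hh hg).const_smul _).add
      ((hb hh hh).const_smul _)),
    τ.map_add _ _ ((hb hh hg).const_smul _) ((hb hh hh).const_smul _),
    τ.map_smul _ _ (hb hg hh), τ.map_smul _ _ (hb hh hg), τ.map_smul _ _ (hb hh hh)]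
  ring

theorem corr_nonneg [Mul G] {g h : G → ℂ} (hg : IsBddFun g) (hh : IsBddFun h)
    (hg₀ : ∀ y, 0 ≤ g y) (hh₀ : ∀ y, 0 ≤ h y) (x : G) : 0 ≤ τ.corr g h x :=
  τ.pos _ (hg.translate_mul_conj hh x) fun y =>
    mul_nonneg (hg₀ _) (star_nonneg_iff.mpr (hh₀ y))

theorem corr_inv_eq_of_posDefFun [Group G] {g h : G → ℂ} (hg : IsBddFun g) (hh : IsBddFun h)
    (hg₀ : ∀ y, 0 ≤ g y) (hh₀ : ∀ y, 0 ≤ h y)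
    (h₁ : PosDefFun (τ.corr (g + h) (g + h)))
    (hI : PosDefFun (τ.corr (g + Complex.I • h) (g + Complex.I • h))) (x : G) :
    τ.corr g h x⁻¹ = τ.corr h g x := by
  -- Hermitian symmetry of the autocorrelations of `g + h` and `g + i h`; as all correlations of
  -- nonnegative functions are real, comparing real and imaginary parts isolates the cross terms.
  rw [← one_smul ℂ h] at h₁
  have e₁ := h₁.apply_inv x
  have eI := hI.apply_inv x
  simp only [τ.corr_add_smul_self hg hh] at e₁ eI
  have him {u v : G → ℂ} (hu : IsBddFun u) (hv : IsBddFun v) (hu₀ : ∀ y, 0 ≤ u y)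
      (hv₀ : ∀ y, 0 ≤ v y) (p : G) : (τ.corr u v p).im = 0 :=
    (Complex.nonneg_iff.mp (τ.corr_nonneg hu hv hu₀ hv₀ p)).2.symm
  simp only [Complex.ext_iff] at e₁ eI ⊢
  simp only [map_one, one_mul, mul_one, Complex.add_re, _root_.map_add, Complex.conj_re,
    Complex.add_im, him hg hg hg₀ hg₀, him hg hh hg₀ hh₀, him hh hg hh₀ hg₀, him hh hh hh₀ hh₀,
    add_zero, Complex.conj_im, neg_zero, and_true, Complex.conj_I, neg_mul, mul_neg,
    Complex.I_mul_I, neg_neg, Complex.neg_re, Complex.mul_re, Complex.I_re, zero_mul, Complex.I_im,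
    mul_zero, sub_self, map_neg, map_mul, Complex.neg_im, Complex.mul_im, zero_add] at e₁ eI ⊢
  linarith [eI.2]

theorem corr_indicator_one [Group G] (C D : Set G) (x : G) :
    τ.corr (C.indicator 1) (D.indicator 1) x = τ.mass (x⁻¹ • C ∩ D) := by
  simp only [corr, mass]
  congr 1
  funext y
  by_cases hC : x * y ∈ C <;> by_cases hD : y ∈ D <;>
    simp [Set.mem_inv_smul_set_iff, hC, hD]

theorem mass_smul_eq_of_posDefFun [Group G] (C : Set G) (σ : G)
    (h₁ : PosDefFun (τ.corr (C.indicator 1 + (σ • C).indicator 1)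
      (C.indicator 1 + (σ • C).indicator 1)))
    (hI : PosDefFun (τ.corr (C.indicator 1 + Complex.I • (σ • C).indicator 1)
      (C.indicator 1 + Complex.I • (σ • C).indicator 1))) :
    τ.mass (σ • C) = τ.mass C := by
  have h := τ.corr_inv_eq_of_posDefFun (isBddFun_indicator_one _) (isBddFun_indicator_one _)
    (indicator_one_nonneg _) (indicator_one_nonneg _) h₁ hI σ
  rwa [corr_indicator_one, corr_indicator_one, inv_inv, Set.inter_self, inv_smul_smul,
    Set.inter_self] at h

theorem false_of_paradoxical [Group G] {ι κ : Type*} [Fintype ι] [Fintype κ] {s : ι → G}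
    {t : κ → G} {A : ι → Set G} {B : κ → Set G} (hA : Pairwise (Disjoint on A))
    (hB : Pairwise (Disjoint on B)) (hAB : ∀ i j, Disjoint (A i) (B j))
    (hApart : Pairwise (Disjoint on fun i => s i • A i) ∧ (⋃ i, s i • A i) = Set.univ)
    (hBpart : Pairwise (Disjoint on fun j => t j • B j) ∧ (⋃ j, t j • B j) = Set.univ)
    (hsA : ∀ i, τ.mass (s i • A i) = τ.mass (A i))
    (htB : ∀ j, τ.mass (t j • B j) = τ.mass (B j)) :
    False := by
  have hA₁ : τ.mass (⋃ i, A i) = 1 := by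
    rw [τ.mass_iUnion hA, ← τ.mass_univ, ← hApart.2, τ.mass_iUnion hApart.1]
    exact Finset.sum_congr rfl fun i _ => (hsA i).symm
  have hB₁ : τ.mass (⋃ j, B j) = 1 := by
    rw [τ.mass_iUnion hB, ← τ.mass_univ, ← hBpart.2, τ.mass_iUnion hBpart.1]
    exact Finset.sum_congr rfl fun j _ => (htB j).symm
  have hdisj : Disjoint (⋃ i, A i) (⋃ j, B j) :=
    Set.disjoint_iUnion_left.2 fun i => Set.disjoint_iUnion_right.2 (hAB i)
  have h := τ.mass_le_one ((⋃ i, A i) ∪ ⋃ j, B j)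
  rw [τ.mass_union hdisj, hA₁, hB₁] at h
  norm_num at h

end LinftyState

theorem exists_state_mass_smul_eq [Group G]
    (H : ∀ (N : ℕ) (f : Fin N → G → ℂ), (∀ i, IsBddFun (f i)) →
      ∃ τ : LinftyState G, ∀ i, PosDefFun (τ.corr (f i) (f i)))
    {κ : Type*} [Fintype κ] (C : κ → Set G) (σ : κ → G) :
    ∃ τ : LinftyState G, ∀ k, τ.mass (σ k • C k) = τ.mass (C k) := by
  let f : κ × Bool → G → ℂ := fun p =>
    (C p.1).indicator 1 + cond p.2 1 Complex.I • (σ p.1 • C p.1).indicator 1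
  have hf : ∀ p, IsBddFun (f p) := fun p =>
    (isBddFun_indicator_one _).add ((isBddFun_indicator_one _).const_smul _)
  let e := Fintype.equivFin (κ × Bool)
  obtain ⟨τ, hτ⟩ := H _ (f ∘ e.symm) fun i => hf _
  have hτf (p : κ × Bool) : PosDefFun (τ.corr (f p) (f p)) := by simpa using hτ (e p)
  refine ⟨τ, fun k => τ.mass_smul_eq_of_posDefFun _ _ ?_ (hτf (k, false))⟩
  simpa [f] using hτf (k, true)

end

theorem stmt_8_general (G : Type*) [Group G]
    (n m : ℕ) (s : Fin n → G) (t : Fin m → G) (A : Fin n → Set G) (B : Fin m → Set G)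
    (hA : ∀ i j, i ≠ j → Disjoint (A i) (A j))
    (hB : ∀ i j, i ≠ j → Disjoint (B i) (B j))
    (hAB : ∀ i j, Disjoint (A i) (B j))
    (hApart : (∀ i j, i ≠ j → Disjoint (s i • A i) (s j • A j)) ∧
      (⋃ i, s i • A i) = Set.univ)
    (hBpart : (∀ i j, i ≠ j → Disjoint (t i • B i) (t j • B j)) ∧
      (⋃ i, t i • B i) = Set.univ) :
    ¬ (∀ (N : ℕ) (f : Fin N → G → ℂ), (∀ i, IsBddFun (f i)) →
        ∃ τ : LinftyState G, ∀ i : Fin N,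
          PosDefFun (fun x => τ.toFun (fun y => f i (x * y) * (starRingEnd ℂ) (f i y)))) := by
  intro H
  obtain ⟨τ, hτ⟩ := exists_state_mass_smul_eq H (Sum.elim A B) (Sum.elim s t)
  exact τ.false_of_paradoxical hA hB hAB hApart hBpart (fun i => hτ (.inl i))
    (fun j => hτ (.inr j))

/-- If a countable discrete group `G` admits a paradoxical decomposition
(pairwise disjoint subsets `A₁,…,Aₙ, B₁,…,B_m` whose translates `sⱼAⱼ` partition `G` and
whose translates `t_k B_k` partition `G`), then it is not the case that every finite family
of bounded functions `f₁,…,f_N : G → ℂ` admits a state `τ` on `ℓ∞(G)` making each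
`x ↦ τ_y(fᵢ(xy) conj(fᵢ(y)))` positive definite. -/
theorem stmt_8 (G : Type*) [Group G] [Countable G]
    (n m : ℕ) (s : Fin n → G) (t : Fin m → G) (A : Fin n → Set G) (B : Fin m → Set G)
    (hA : ∀ i j, i ≠ j → Disjoint (A i) (A j))
    (hB : ∀ i j, i ≠ j → Disjoint (B i) (B j))
    (hAB : ∀ i j, Disjoint (A i) (B j))
    (hApart : (∀ i j, i ≠ j → Disjoint (s i • A i) (s j • A j)) ∧
      (⋃ i, s i • A i) = Set.univ)
    (hBpart : (∀ i j, i ≠ j → Disjoint (t i • B i) (t j • B j)) ∧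
      (⋃ i, t i • B i) = Set.univ) :
    ¬ (∀ (N : ℕ) (f : Fin N → G → ℂ), (∀ i, IsBddFun (f i)) →
        ∃ τ : LinftyState G, ∀ i : Fin N,
          PosDefFun (fun x => τ.toFun (fun y => f i (x * y) * (starRingEnd ℂ) (f i y)))) :=
  stmt_8_general G n m s t A B hA hB hAB hApart hBpart
end

section
/- Let G be a group and H a Hilbert space. The following are equivalent: (0) there exist real numbers κ > 0 and 0 < δ < 1 such that for every 0 < ε < δ and every unitary ε-representation φ: G → U(H), there exists a unitary representation π: G → U(H) such that ‖φ(x) − π(x)‖ ≤ κε for all x ∈ G; (0') there exist real numbers κ₁, κ₂ > 0, 0 < δ < 1, and p > 1 such that for every 0 < ε < 1 with κ₁ ε^{p−1} ≤ δ^{p−1} and every unitary ε-representation φ: G → U(H), there exists a unital positive definite map ψ: G → B(H) satisfying ‖ψ(xy) − ψ(x)ψ(y)‖ ≤ κ₁ ε^{p} for all x, y ∈ G, such that ‖φ(x) − ψ(x)‖ ≤ κ₂ ε for all x ∈ G. -/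
/-!
(0) ⇒ (0'): a unitary representation is itself a unital, positive definite, exactly
multiplicative map.

(0') ⇒ (0): positive definiteness forces `ψ x⁻¹ = (ψ x)⋆`, so `(ψ x)⋆ ψ x` and `ψ x (ψ x)⋆` are
`κ₁ ε ^ p`-close to `1`, and the polar part `u x = ψ x |ψ x|⁻¹` is a unitary within
`4 κ₁ ε ^ p` of `ψ x`. As `p > 1`, for small `ε` this makes `u` a unitary `ε / 2`-representation
at distance `O(ε)` from `φ`. Iterating halves the defect at each step; the maps obtained form a
geometric Cauchy sequence whose limit is a unitary representation within `O(ε)` of `φ`.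
-/

open scoped ComplexOrder

open Filter Topology
open scoped InnerProductSpace

lemma abs_one_sub_inv_sqrt_le {s t : ℝ} (hs : 1 / 2 ≤ s) (hst : |s - 1| ≤ t) :
    |1 - (√s)⁻¹| ≤ 2 * t := by
  have hr : 1 / 2 ≤ √s := by
    rw [Real.le_sqrt (by norm_num) (by linarith)]; linarith
  have hsq : √s * √s = s := Real.mul_self_sqrt (by linarith)
  have hr1 : |√s - 1| ≤ t := calc
      |√s - 1| ≤ |√s - 1| * (√s + 1) := le_mul_of_one_le_right (abs_nonneg _) (by linarith)
      _ = |s - 1| := by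
        rw [← abs_of_pos (show 0 < √s + 1 by linarith), ← abs_mul]
        congr 1
        linear_combination hsq
      _ ≤ t := hst
  rw [show 1 - (√s)⁻¹ = (√s - 1) / √s by field_simp, abs_div,
    abs_of_pos (show 0 < √s by linarith), div_le_iff₀ (by linarith)]
  nlinarith [abs_nonneg (√s - 1)]

lemma abs_sub_one_le_norm_sub_one_of_mem_spectrum {A : Type*} [NormedRing A] [NormedAlgebra ℝ A]
    [CompleteSpace A] [NormOneClass A] {a : A} {s : ℝ} (hs : s ∈ spectrum ℝ a) :
    |s - 1| ≤ ‖a - 1‖ := by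
  have h : s - 1 ∈ spectrum ℝ (a - algebraMap ℝ A 1) := by
    rw [← spectrum.sub_singleton_eq]
    exact Set.sub_mem_sub hs rfl
  simpa using spectrum.norm_le_norm_of_mem h

section CStarAlgebra

variable {A : Type*} [CStarAlgebra A]

lemma IsSelfAdjoint.exists_inv_sqrt [Nontrivial A] {a : A} (ha : IsSelfAdjoint a) {t : ℝ}
    (ht : t ≤ 1 / 2) (h : ‖a - 1‖ ≤ t) :
    ∃ v : A, IsSelfAdjoint v ∧ Commute v a ∧ v * v * a = 1 ∧ ‖1 - v‖ ≤ 2 * t := by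
  have hspec : ∀ s ∈ spectrum ℝ a, 1 / 2 ≤ s ∧ |s - 1| ≤ t := fun s hs => by
    have := (abs_sub_one_le_norm_sub_one_of_mem_spectrum hs).trans h
    exact ⟨by linarith [(abs_le.1 this).1], this⟩
  have hcont : ContinuousOn (fun s : ℝ => (√s)⁻¹) (spectrum ℝ a) :=
    Real.continuous_sqrt.continuousOn.inv₀ fun s hs =>
      (Real.sqrt_pos.2 (by linarith [(hspec s hs).1])).ne'
  refine ⟨cfc (fun s : ℝ => (√s)⁻¹) a, cfc_predicate _ a, ?_, ?_, ?_⟩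
  · simpa [cfc_id' ℝ a] using cfc_commute_cfc (fun s : ℝ => (√s)⁻¹) (fun s => s) a
  · calc cfc (fun s : ℝ => (√s)⁻¹) a * cfc (fun s : ℝ => (√s)⁻¹) a * a
          = cfc (fun s : ℝ => (√s)⁻¹ * (√s)⁻¹ * s) a := by
            rw [cfc_mul _ _ a, cfc_mul _ _ a, cfc_id' ℝ a]
      _ = cfc (fun _ : ℝ => 1) a := cfc_congr fun s hs => by
            have : √s * √s = s := Real.mul_self_sqrt (by linarith [(hspec s hs).1])
            have : √s ≠ 0 := (Real.sqrt_pos.2 (by linarith [(hspec s hs).1])).ne'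
            field_simp
            linarith
      _ = 1 := cfc_const_one ℝ a
  · rw [← cfc_const_one ℝ a, ← cfc_sub _ _ a]
    exact norm_cfc_le (by linarith [norm_nonneg (a - 1)]) fun s hs =>
      abs_one_sub_inv_sqrt_le (hspec s hs).1 (hspec s hs).2

lemma exists_mem_unitary_norm_sub_le {T : A} {t : ℝ} (ht : t ≤ 1 / 2)
    (h₁ : ‖star T * T - 1‖ ≤ t) (h₂ : ‖T * star T - 1‖ ≤ t) :
    ∃ u ∈ unitary A, ‖T - u‖ ≤ 4 * t := by
  rcases subsingleton_or_nontrivial A with _ | _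
  · refine ⟨1, one_mem _, ?_⟩
    simp only [Subsingleton.elim T 1, sub_self, norm_zero]
    linarith [norm_nonneg (T * star T - 1)]
  obtain ⟨v, hv, hva, hvv, hv1⟩ := (IsSelfAdjoint.star_mul_self T).exists_inv_sqrt ht h₁
  have hunit : IsUnit (T * star T) := sub_sub_self 1 (T * star T) ▸
    (Units.oneSub (1 - T * star T) (by rw [norm_sub_rev]; linarith)).isUnit
  have hleft : v * v * star T * T = 1 := by rw [mul_assoc, hvv]
  obtain ⟨R, hR⟩ : ∃ R, T * R = 1 :=
    ⟨star T * ↑hunit.unit⁻¹, by rw [← mul_assoc]; exact hunit.mul_val_inv⟩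
  -- `T` has a right inverse, so its left inverse `v * v * star T` is two-sided
  have hright : T * (v * v * star T) = 1 := by rwa [left_inv_eq_right_inv hleft hR]
  refine ⟨T * v, Unitary.mem_iff.2 ⟨?_, ?_⟩, ?_⟩
  · calc star (T * v) * (T * v) = v * (star T * T * v) := by
          rw [star_mul, hv.star_eq]; simp only [mul_assoc]
      _ = 1 := by rw [← hva.eq, ← mul_assoc, hvv]
  · rw [star_mul, hv.star_eq]; simpa only [mul_assoc] using hright
  · have hT : ‖T‖ ≤ 2 := by
      have : ‖T‖ * ‖T‖ ≤ t + 1 := by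
        rw [← CStarRing.norm_star_mul_self]
        calc ‖star T * T‖ ≤ ‖(1 : A)‖ + ‖star T * T - 1‖ := norm_le_norm_add_norm_sub' _ _
          _ ≤ t + 1 := by rw [norm_one]; linarith
      nlinarith [norm_nonneg T]
    calc ‖T - T * v‖ = ‖T * (1 - v)‖ := by rw [mul_sub, mul_one]
      _ ≤ ‖T‖ * ‖1 - v‖ := norm_mul_le _ _
      _ ≤ 2 * (2 * t) := by gcongr
      _ = 4 * t := by ring

end CStarAlgebra

section Hilbert

variable {G : Type*} [Group G] {H : Type*} [NormedAddCommGroup H] [InnerProductSpace ℂ H]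

lemma eq_zero_of_forall_im_inner_eq_zero {ξ : H} (h : ∀ η : H, (⟪ξ, η⟫_ℂ).im = 0) : ξ = 0 := by
  have := h (Complex.I • ξ)
  rw [inner_smul_right, inner_self_eq_norm_sq_to_K] at this
  simpa [← Complex.ofReal_pow] using this

lemma PosDefMap.map_inv [CompleteSpace H] {ψ : G → H →L[ℂ] H} (hψ : PosDefMap ψ) (g : G) :
    ψ g⁻¹ = star (ψ g) := by
  have him : ∀ ξ η : H, (⟪ψ g η, ξ⟫_ℂ).im + (⟪ψ g⁻¹ ξ, η⟫_ℂ).im = 0 := by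
    intro ξ η
    have h₂ := (Complex.nonneg_iff.1 (hψ 2 ![1, g] ![ξ, η])).2
    have hξ := (Complex.nonneg_iff.1 (hψ 1 ![1] ![ξ])).2
    have hη := (Complex.nonneg_iff.1 (hψ 1 ![1] ![η])).2
    simp only [Fin.sum_univ_two, Fin.isValue, Matrix.cons_val_zero, mul_one, Matrix.cons_val_one,
      Matrix.cons_val_fin_one, inv_one, one_mul, inv_mul_cancel, Complex.add_im,
      Finset.univ_unique, Fin.default_eq_zero, Finset.sum_const, Finset.card_singleton,
      one_smul] at h₂ hξ hη
    linarith
  ext ξ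
  refine sub_eq_zero.1 (eq_zero_of_forall_im_inner_eq_zero fun η => ?_)
  rw [inner_sub_left, ContinuousLinearMap.star_eq_adjoint,
    ContinuousLinearMap.adjoint_inner_left, ← inner_conj_symm ξ, Complex.sub_im, Complex.conj_im]
  linarith [him ξ η]

lemma posDefMap_coe_monoidHom [CompleteSpace H] (π : G →* unitary (H →L[ℂ] H)) :
    PosDefMap fun x => (π x : H →L[ℂ] H) := by
  intro n x ξ
  have hterm : ∀ i j, ⟪(π ((x i)⁻¹ * x j) : H →L[ℂ] H) (ξ j), ξ i⟫_ℂ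
      = ⟪(π (x j) : H →L[ℂ] H) (ξ j), (π (x i) : H →L[ℂ] H) (ξ i)⟫_ℂ := fun i j => by
    rw [map_mul, Submonoid.coe_mul, map_inv, ← Unitary.star_eq_inv, Unitary.coe_star,
      mul_apply_eq_comp, ContinuousLinearMap.star_eq_adjoint,
      ContinuousLinearMap.adjoint_inner_left]
  set v := ∑ i, (π (x i) : H →L[ℂ] H) (ξ i)
  have : ∑ i, ∑ j, ⟪(π ((x i)⁻¹ * x j) : H →L[ℂ] H) (ξ j), ξ i⟫_ℂ = ⟪v, v⟫_ℂ := by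
    simp only [hterm, v, sum_inner, inner_sum]
  rw [this, inner_self_eq_norm_sq_to_K]
  positivity

end Hilbert

section AlmostRep

variable {G : Type*} [Group G] {A : Type*}

def IsUnitaryEpsRep [NormedRing A] [StarRing A] (ε : ℝ) (φ : G → A) : Prop :=
  (∀ x, φ x ∈ unitary A) ∧ ∀ x y, ‖φ (x * y) - φ x * φ y‖ ≤ ε

lemma norm_map_mul_sub_le_of_near [NormedRing A] [StarRing A] [CStarRing A] {ψ u : G → A}
    {τ a : ℝ} (hψ : ∀ x y, ‖ψ (x * y) - ψ x * ψ y‖ ≤ τ) (hu : ∀ x, u x ∈ unitary A)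
    (hψu : ∀ x, ‖ψ x - u x‖ ≤ a) (x y : G) :
    ‖u (x * y) - u x * u y‖ ≤ τ + a * (3 + a) := by
  have hsplit : u (x * y) - u x * u y = (u (x * y) - ψ (x * y)) + (ψ (x * y) - ψ x * ψ y)
      + (ψ x - u x) * (ψ y - u y) + (ψ x - u x) * u y + u x * (ψ y - u y) := by noncomm_ring
  have hxy : ‖u (x * y) - ψ (x * y)‖ ≤ a := norm_sub_rev (ψ (x * y)) _ ▸ hψu (x * y)
  calc ‖u (x * y) - u x * u y‖
      ≤ ‖u (x * y) - ψ (x * y)‖ + ‖ψ (x * y) - ψ x * ψ y‖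
        + ‖ψ x - u x‖ * ‖ψ y - u y‖ + ‖ψ x - u x‖ + ‖ψ y - u y‖ := by
        rw [hsplit]
        refine (norm_add_le _ _).trans ?_
        rw [CStarRing.norm_mem_unitary_mul _ (hu x)]
        gcongr
        refine (norm_add₄_le ..).trans ?_
        rw [CStarRing.norm_mul_mem_unitary _ (hu y)]
        gcongr
        exact norm_mul_le _ _
    _ ≤ a + τ + a * a + a + a := by
        gcongr
        · exact hψ x y
        · exact (norm_nonneg _).trans (hψu x)
        all_goals exact hψu _
    _ = τ + a * (3 + a) := by ring

lemma exists_monoidHom_of_tendsto [NormedRing A] [StarRing A] [ContinuousStar A]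
    {φ : ℕ → G → A} {ε : ℕ → ℝ} {L : G → A} (hφ : ∀ n, IsUnitaryEpsRep (ε n) (φ n))
    (hε : Tendsto ε atTop (𝓝 0)) (hL : ∀ x, Tendsto (fun n => φ n x) atTop (𝓝 (L x))) :
    ∃ π : G →* unitary A, ∀ x, (π x : A) = L x := by
  have hunit : ∀ x, L x ∈ unitary A := fun x =>
    isClosed_unitary.mem_of_tendsto (hL x) (.of_forall fun n => (hφ n).1 x)
  have hmul : ∀ x y, L (x * y) = L x * L y := fun x y => sub_eq_zero.1 <|
    tendsto_nhds_unique ((hL (x * y)).sub ((hL x).mul (hL y)))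
      (squeeze_zero_norm (fun n => (hφ n).2 x y) hε)
  exact ⟨MonoidHom.mk' (fun x => ⟨L x, hunit x⟩) fun x y => Subtype.ext (hmul x y), fun x => rfl⟩

lemma exists_monoidHom_near_of_halving [NormedRing A] [StarRing A] [ContinuousStar A]
    [CompleteSpace A] {C δ : ℝ}
    (hstep : ∀ ε, 0 < ε → ε < δ → ∀ φ : G → A, IsUnitaryEpsRep ε φ →
      ∃ φ', IsUnitaryEpsRep (ε / 2) φ' ∧ ∀ x, ‖φ x - φ' x‖ ≤ C * ε)
    {ε : ℝ} (hε : 0 < ε) (hεδ : ε < δ) {φ : G → A} (hφ : IsUnitaryEpsRep ε φ) :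
    ∃ π : G →* unitary A, ∀ x, ‖φ x - π x‖ ≤ 2 * C * ε := by
  have hstep' : ∀ (n : ℕ) (ψ : G → A), ∃ ψ', IsUnitaryEpsRep (ε / 2 ^ n) ψ →
      IsUnitaryEpsRep (ε / 2 ^ (n + 1)) ψ' ∧ ∀ x, ‖ψ x - ψ' x‖ ≤ C * (ε / 2 ^ n) := by
    intro n ψ
    by_cases hψ : IsUnitaryEpsRep (ε / 2 ^ n) ψ
    · obtain ⟨ψ', hψ', hd⟩ := hstep (ε / 2 ^ n) (by positivity)
        ((div_le_self hε.le (one_le_pow₀ one_le_two)).trans_lt hεδ) ψ hψ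
      exact ⟨ψ', fun _ => ⟨by rwa [pow_succ, ← div_div], hd⟩⟩
    · exact ⟨ψ, fun h => absurd h hψ⟩
  choose F hF using hstep'
  let seq : ℕ → G → A := fun n => Nat.rec (motive := fun _ => G → A) φ F n
  have hrep : ∀ n, IsUnitaryEpsRep (ε / 2 ^ n) (seq n) := by
    intro n
    induction n with
    | zero => simpa [seq] using hφ
    | succ n ih => exact (hF n _ ih).1
  have hdist : ∀ x n, dist (seq n x) (seq (n + 1) x) ≤ 2 * C * ε / 2 / 2 ^ n := fun x n => by
    rw [dist_eq_norm]
    convert (hF n _ (hrep n)).2 x using 1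
    ring
  choose L hL using fun x =>
    cauchySeq_tendsto_of_complete (cauchySeq_of_le_geometric_two (hdist x))
  have hε0 : Tendsto (fun n : ℕ => ε / 2 ^ n) atTop (𝓝 0) := by
    simpa [div_eq_mul_inv] using
      (tendsto_inv_atTop_zero.comp (tendsto_pow_atTop_atTop_of_one_lt one_lt_two)).const_mul ε
  obtain ⟨π, hπ⟩ := exists_monoidHom_of_tendsto hrep hε0 hL
  exact ⟨π, fun x => by
    rw [hπ, ← dist_eq_norm]
    exact dist_le_of_le_geometric_two_of_tendsto₀ (hdist x) (hL x)⟩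

lemma exists_unitaryEpsRep_near_of_map_inv [CStarAlgebra A] {ψ : G → A}
    (hinv : ∀ x, ψ x⁻¹ = star (ψ x)) (h1 : ψ 1 = 1) {τ : ℝ} (hτ : τ ≤ 1 / 2)
    (hmul : ∀ x y, ‖ψ (x * y) - ψ x * ψ y‖ ≤ τ) :
    ∃ u, IsUnitaryEpsRep (21 * τ) u ∧ ∀ x, ‖ψ x - u x‖ ≤ 4 * τ := by
  have hnear : ∀ x, ∃ u ∈ unitary A, ‖ψ x - u‖ ≤ 4 * τ := fun x =>
    exists_mem_unitary_norm_sub_le hτ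
      (by rw [← hinv, ← h1, norm_sub_rev, ← inv_mul_cancel x]; exact hmul x⁻¹ x)
      (by rw [← hinv, ← h1, norm_sub_rev, ← mul_inv_cancel x]; exact hmul x x⁻¹)
  choose u hu hψu using hnear
  have hτ0 : 0 ≤ τ := (norm_nonneg _).trans (hmul 1 1)
  refine ⟨u, ⟨hu, fun x y => ?_⟩, hψu⟩
  calc ‖u (x * y) - u x * u y‖ ≤ τ + 4 * τ * (3 + 4 * τ) :=
        norm_map_mul_sub_le_of_near hmul hu hψu x y
    _ ≤ 21 * τ := by nlinarith

lemma exists_unitaryEpsRep_half_near [CStarAlgebra A] {φ ψ : G → A}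
    (hinv : ∀ x, ψ x⁻¹ = star (ψ x)) (h1 : ψ 1 = 1) {τ ε κ : ℝ}
    (hmul : ∀ x y, ‖ψ (x * y) - ψ x * ψ y‖ ≤ τ) (hτ : 42 * τ ≤ ε) (hε : ε < 1)
    (hφψ : ∀ x, ‖φ x - ψ x‖ ≤ κ * ε) :
    ∃ φ', IsUnitaryEpsRep (ε / 2) φ' ∧ ∀ x, ‖φ x - φ' x‖ ≤ (κ + 1) * ε := by
  obtain ⟨u, hu, hψu⟩ := exists_unitaryEpsRep_near_of_map_inv hinv h1 (by linarith) hmul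
  refine ⟨u, ⟨hu.1, fun x y => (hu.2 x y).trans (by linarith)⟩, fun x => ?_⟩
  have hτ0 : 0 ≤ τ := (norm_nonneg _).trans (hmul 1 1)
  calc ‖φ x - u x‖ ≤ ‖φ x - ψ x‖ + ‖ψ x - u x‖ := norm_sub_le_norm_sub_add_norm_sub _ _ _
    _ ≤ (κ + 1) * ε := by linarith [hφψ x, hψu x]

end AlmostRep

lemma eventually_mul_rpow_lt (κ : ℝ) {q c : ℝ} (hq : 0 < q) (hc : 0 < c) :
    ∀ᶠ ε in 𝓝 (0 : ℝ), κ * ε ^ q < c := by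
  have : Tendsto (fun ε : ℝ => κ * ε ^ q) (𝓝 0) (𝓝 0) := by
    simpa [Real.zero_rpow hq.ne'] using
      ((Real.continuousAt_rpow_const 0 q (Or.inr hq.le)).tendsto).const_mul κ
  exact this.eventually (gt_mem_nhds hc)

/-- Proposition 1.2 of \cite{stable}. For a group `G` and a Hilbert
space `H`, the linear Ulam stability condition (0) for unitary representations is
equivalent to the Ulam stability condition (0') for sufficiently multiplicative unital
positive definite maps. -/
theorem stmt_13 (G : Type*) [Group G]
    (H : Type*) [NormedAddCommGroup H] [InnerProductSpace ℂ H] [CompleteSpace H] :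
    (∃ κ δ : ℝ, 0 < κ ∧ 0 < δ ∧ δ < 1 ∧
      ∀ ε : ℝ, 0 < ε → ε < δ →
        ∀ φ : G → H →L[ℂ] H, (∀ x, φ x ∈ unitary (H →L[ℂ] H)) →
          (∀ x y, ‖φ (x * y) - φ x * φ y‖ ≤ ε) →
          ∃ π : G →* unitary (H →L[ℂ] H), ∀ x, ‖φ x - (π x : H →L[ℂ] H)‖ ≤ κ * ε) ↔
    (∃ κ₁ κ₂ δ p : ℝ, 0 < κ₁ ∧ 0 < κ₂ ∧ 0 < δ ∧ δ < 1 ∧ 1 < p ∧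
      ∀ ε : ℝ, 0 < ε → ε < 1 → κ₁ * ε ^ (p - 1) ≤ δ ^ (p - 1) →
        ∀ φ : G → H →L[ℂ] H, (∀ x, φ x ∈ unitary (H →L[ℂ] H)) →
          (∀ x y, ‖φ (x * y) - φ x * φ y‖ ≤ ε) →
          ∃ ψ : G → H →L[ℂ] H, PosDefMap ψ ∧ ψ 1 = 1 ∧
            (∀ x y, ‖ψ (x * y) - ψ x * ψ y‖ ≤ κ₁ * ε ^ p) ∧
            ∀ x, ‖φ x - ψ x‖ ≤ κ₂ * ε) := by
  constructor
  · rintro ⟨κ, δ, hκ, hδ, hδ1, hstab⟩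
    refine ⟨1, κ, δ / 2, 2, one_pos, hκ, by positivity, by linarith, one_lt_two, ?_⟩
    intro ε hε _ hεδ φ hφ hφmul
    norm_num at hεδ
    obtain ⟨π, hπ⟩ := hstab ε hε (by linarith) φ hφ hφmul
    refine ⟨fun x => π x, posDefMap_coe_monoidHom π, by simp, fun x y => ?_, hπ⟩
    simp only [map_mul, Submonoid.coe_mul, sub_self, norm_zero]
    positivity
  · rintro ⟨κ₁, κ₂, δ, p, hκ₁, hκ₂, hδ, -, hp, hstab⟩
    have hq : 0 < p - 1 := by linarith
    obtain ⟨δ₀, ⟨hδ₀, hδ₀1⟩, hsmall⟩ :=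
      (mem_nhdsGT_iff_exists_mem_Ioc_Ioo_subset one_half_pos).1 (nhdsWithin_le_nhds
        ((eventually_mul_rpow_lt κ₁ hq (c := δ ^ (p - 1)) (by positivity)).and
          ((eventually_mul_rpow_lt (42 * κ₁) hq one_pos).and (gt_mem_nhds one_pos))))
    have hstep : ∀ ε, 0 < ε → ε < δ₀ → ∀ φ : G → H →L[ℂ] H, IsUnitaryEpsRep ε φ →
        ∃ φ', IsUnitaryEpsRep (ε / 2) φ' ∧ ∀ x, ‖φ x - φ' x‖ ≤ (κ₂ + 1) * ε := by
      intro ε hε hεδ₀ φ hφ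
      obtain ⟨hεδ, h42, hε1⟩ := hsmall ⟨hε, hεδ₀⟩
      obtain ⟨ψ, hψ, hψ1, hψmul, hφψ⟩ := hstab ε hε hε1 hεδ.le φ hφ.1 hφ.2
      refine exists_unitaryEpsRep_half_near hψ.map_inv hψ1 hψmul ?_ hε1 hφψ
      have hεp : ε ^ p = ε ^ (p - 1) * ε := by rw [← Real.rpow_add_one hε.ne', sub_add_cancel]
      rw [hεp]
      nlinarith
    exact ⟨2 * (κ₂ + 1), δ₀, by positivity, hδ₀, by linarith, fun ε hε hεδ₀ φ hφ hφmul =>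
      exists_monoidHom_near_of_halving hstep hε hεδ₀ ⟨hφ, hφmul⟩⟩
end
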